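/- arXiv:1406.3777 — 11 statements merged into one kernel-verified Lean document; each statement's English description precedes it below -/
import Mathlib

section
/- Let g be a finite-dimensional complex Lie algebra and f a nonzero homogeneous element of the symmetric algebra S(g) such that for every g-element expressed as a polynomial, the Poisson bracket {f,h} is divisible by f. Then f is a semi-invariant: there exists a linear character χ: g → ℂ vanishing on [g,g] such that {f,h} = χ(dh)·f for all h ∈ S(g), where dh denotes the linear part pairing. -/
/-!
Write `Dⱼ = {·, xⱼ}`. Each `Dⱼ` preserves homogeneous degree, so `f ∣ Dⱼ f` forces
`Dⱼ f = χⱼ f` for a scalar `χⱼ` (compare total degrees). The `Dⱼ` are derivations with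
`[Dⱼ, Dᵢ] = Σₖ cᵢⱼₖ Dₖ`, since by the Jacobi identity both sides agree on the
generators; applied to `f` the left side vanishes, whence `Σₖ cᵢⱼₖ χₖ = 0`.
-/

open MvPolynomial

/-- The Lie–Poisson bracket on `S(g) = ℂ[x₁,…,xₙ]`, where `c` are the structure
constants of `g` in a fixed basis: `{f,g} = Σ_{i,j} [xᵢ,xⱼ] ∂f/∂xᵢ ∂g/∂xⱼ`. -/
noncomputable def poissonBracket (n : ℕ) (c : Fin n → Fin n → Fin n → ℂ)
    (f g : MvPolynomial (Fin n) ℂ) : MvPolynomial (Fin n) ℂ :=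
  ∑ i : Fin n, ∑ j : Fin n,
    (∑ k : Fin n, C (c i j k) * X k) * pderiv i f * pderiv j g

lemma Derivation.sum_apply {R A M ι : Type*} [CommSemiring R] [CommSemiring A]
    [AddCommMonoid M] [Algebra R A] [Module A M] [Module R M] (s : Finset ι)
    (D : ι → Derivation R A M) (a : A) :
    (∑ i ∈ s, D i) a = ∑ i ∈ s, D i a := by
  rw [← Derivation.coeFnAddMonoidHom_apply, map_sum, Finset.sum_apply]
  rfl

namespace LiePoisson

variable {σ R : Type*} [Fintype σ] [CommRing R] (c : σ → σ → σ → R)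

/-- `[xₐ, xⱼ]` as a linear polynomial. -/
noncomputable def bracketLinear (a j : σ) : MvPolynomial σ R := ∑ k, C (c a j k) * X k

/-- The derivation `{·, xⱼ}`. -/
noncomputable def hamiltonian (j : σ) : Derivation R (MvPolynomial σ R) (MvPolynomial σ R) :=
  ∑ a, bracketLinear c a j • pderiv a

lemma hamiltonian_apply (j : σ) (f : MvPolynomial σ R) :
    hamiltonian c j f = ∑ a, bracketLinear c a j * pderiv a f := by
  simp only [hamiltonian, Derivation.sum_apply, Derivation.smul_apply, smul_eq_mul]

lemma hamiltonian_X (j l : σ) : hamiltonian c j (X l) = bracketLinear c l j := by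
  classical
  simp [hamiltonian_apply, pderiv_X, Pi.single_apply]

lemma hamiltonian_bracketLinear (i j l : σ) :
    hamiltonian c j (bracketLinear c l i) = ∑ m, C (∑ k, c l i k * c k j m) * X m := by
  simp only [bracketLinear, map_sum, C_mul', Derivation.map_smul, hamiltonian_X, Finset.smul_sum,
    smul_smul]
  rw [Finset.sum_comm]
  simp only [← C_mul', ← Finset.sum_mul, ← map_sum]

lemma sum_mul_sub_sum_mul_eq_sum_mul (hskew : ∀ i j k, c i j k = - c j i k)
    (hjacobi : ∀ i j l m, (∑ k, c i j k * c k l m) + (∑ k, c j l k * c k i m) +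
      (∑ k, c l i k * c k j m) = 0) (i j l m : σ) :
    ∑ k, c l i k * c k j m - ∑ k, c l j k * c k i m = ∑ k, c i j k * c l k m := by
  have e1 : ∑ k, c i j k * c k l m = -∑ k, c i j k * c l k m := by
    rw [← Finset.sum_neg_distrib]
    exact Finset.sum_congr rfl fun k _ => by rw [hskew k l m]; ring
  have e2 : ∑ k, c j l k * c k i m = -∑ k, c l j k * c k i m := by
    rw [← Finset.sum_neg_distrib]
    exact Finset.sum_congr rfl fun k _ => by rw [hskew j l k]; ring
  linear_combination hjacobi i j l m - e1 - e2

lemma lie_hamiltonian (hskew : ∀ i j k, c i j k = - c j i k)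
    (hjacobi : ∀ i j l m, (∑ k, c i j k * c k l m) + (∑ k, c j l k * c k i m) +
      (∑ k, c l i k * c k j m) = 0) (i j : σ) :
    ⁅hamiltonian c j, hamiltonian c i⁆ = ∑ k, c i j k • hamiltonian c k := by
  refine derivation_ext fun l => ?_
  rw [Derivation.commutator_apply, hamiltonian_X, hamiltonian_X, hamiltonian_bracketLinear,
    hamiltonian_bracketLinear, Derivation.sum_apply]
  simp only [Derivation.smul_apply, hamiltonian_X, bracketLinear, Finset.smul_sum]
  rw [Finset.sum_comm, ← Finset.sum_sub_distrib]
  refine Finset.sum_congr rfl fun m _ => ?_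
  rw [← sub_mul, ← map_sub, sum_mul_sub_sum_mul_eq_sum_mul c hskew hjacobi, map_sum,
    Finset.sum_mul]
  simp only [C_mul', smul_smul]

lemma sum_mul_eq_zero_of_hamiltonian_eq_smul [IsDomain R]
    (hskew : ∀ i j k, c i j k = - c j i k)
    (hjacobi : ∀ i j l m, (∑ k, c i j k * c k l m) + (∑ k, c j l k * c k i m) +
      (∑ k, c l i k * c k j m) = 0) {f : MvPolynomial σ R} (hf0 : f ≠ 0) {χ : σ → R}
    (hχ : ∀ j, hamiltonian c j f = χ j • f) (i j : σ) :
    ∑ k, c i j k * χ k = 0 := by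
  have h := congr($(lie_hamiltonian c hskew hjacobi i j) f)
  rw [Derivation.commutator_apply, hχ, hχ, Derivation.map_smul, Derivation.map_smul, hχ, hχ,
    smul_smul, smul_smul, mul_comm, sub_self, Derivation.sum_apply] at h
  simp only [Derivation.smul_apply, hχ, smul_smul, ← Finset.sum_smul] at h
  exact (smul_eq_zero.mp h.symm).resolve_right hf0

lemma isHomogeneous_bracketLinear (a j : σ) : (bracketLinear c a j).IsHomogeneous 1 :=
  IsHomogeneous.sum _ _ _ fun _ _ => isHomogeneous_C_mul_X _ _

lemma isHomogeneous_hamiltonian {f : MvPolynomial σ R} {m : ℕ} (hf : f.IsHomogeneous m)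
    (j : σ) :
    (hamiltonian c j f).IsHomogeneous m := by
  cases m with
  | zero =>
    rw [← totalDegree_zero_iff_isHomogeneous, totalDegree_eq_zero_iff_eq_C] at hf
    rw [hf, ← algebraMap_eq, Derivation.map_algebraMap]
    exact isHomogeneous_zero _ _ _
  | succ m =>
    rw [hamiltonian_apply, add_comm]
    exact IsHomogeneous.sum _ _ _ fun a _ => (isHomogeneous_bracketLinear c a j).mul hf.pderiv

omit [Fintype σ] in
lemma exists_eq_C_of_isHomogeneous_mul [IsDomain R] {f q : MvPolynomial σ R} {m : ℕ}
    (hf0 : f ≠ 0) (hf : f.IsHomogeneous m) (hfq : (f * q).IsHomogeneous m) : ∃ r, q = C r := by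
  rcases eq_or_ne q 0 with rfl | hq0
  · exact ⟨0, C_0.symm⟩
  have hdeg := (hfq.totalDegree (mul_ne_zero hf0 hq0)).symm
  rw [totalDegree_mul_of_isDomain hf0 hq0, hf.totalDegree hf0, left_eq_add] at hdeg
  exact ⟨_, totalDegree_eq_zero_iff_eq_C.mp hdeg⟩

lemma exists_hamiltonian_eq_smul_of_dvd [IsDomain R] {f : MvPolynomial σ R} {m : ℕ}
    (hf0 : f ≠ 0) (hf : f.IsHomogeneous m) {j : σ} (hdvd : f ∣ hamiltonian c j f) :
    ∃ r : R, hamiltonian c j f = r • f := by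
  obtain ⟨q, hq⟩ := hdvd
  obtain ⟨r, rfl⟩ :=
    exists_eq_C_of_isHomogeneous_mul hf0 hf (hq ▸ isHomogeneous_hamiltonian c hf j)
  exact ⟨r, by rw [hq, mul_comm, C_mul']⟩

end LiePoisson

open LiePoisson

lemma poissonBracket_eq_sum_hamiltonian (n : ℕ) (c : Fin n → Fin n → Fin n → ℂ)
    (f h : MvPolynomial (Fin n) ℂ) :
    poissonBracket n c f h = ∑ j, hamiltonian c j f * pderiv j h := by
  rw [poissonBracket, Finset.sum_comm]
  simp only [hamiltonian_apply, bracketLinear, Finset.sum_mul]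

lemma poissonBracket_X (n : ℕ) (c : Fin n → Fin n → Fin n → ℂ) (f : MvPolynomial (Fin n) ℂ)
    (j : Fin n) : poissonBracket n c f (X j) = hamiltonian c j f := by
  classical
  simp [poissonBracket_eq_sum_hamiltonian, pderiv_X, Pi.single_apply]

theorem stmt0 (n : ℕ) (c : Fin n → Fin n → Fin n → ℂ)
    (hskew : ∀ i j k, c i j k = - c j i k)
    (hjacobi : ∀ i j l m, (∑ k, c i j k * c k l m) + (∑ k, c j l k * c k i m) +
      (∑ k, c l i k * c k j m) = 0)
    (f : MvPolynomial (Fin n) ℂ) (hf0 : f ≠ 0) (m : ℕ) (hhom : f.IsHomogeneous m)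
    (hdvd : ∀ h : MvPolynomial (Fin n) ℂ, f ∣ poissonBracket n c f h) :
    ∃ χ : Fin n → ℂ, (∀ i j, ∑ k, c i j k * χ k = 0) ∧
      ∀ h : MvPolynomial (Fin n) ℂ,
        poissonBracket n c f h = (∑ i, C (χ i) * pderiv i h) * f := by
  have hχ : ∀ j, ∃ r : ℂ, hamiltonian c j f = r • f := fun j =>
    exists_hamiltonian_eq_smul_of_dvd c hf0 hhom (poissonBracket_X n c f j ▸ hdvd (X j))
  choose χ hχ using hχ
  refine ⟨χ, sum_mul_eq_zero_of_hamiltonian_eq_smul c hskew hjacobi hf0 hχ, fun h => ?_⟩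
  rw [poissonBracket_eq_sum_hamiltonian, Finset.sum_mul]
  refine Finset.sum_congr rfl fun j _ => ?_
  rw [hχ, ← C_mul']
  ring
end

section
/- Let f, g be semi-invariants of a finite-dimensional complex Lie algebra g, a ∈ g* a fixed covector, and λ ∈ ℂ. Then the shifted polynomial h(x) = g(a + λx) satisfies {f, h} = 0 with respect to the Lie-Poisson bracket. -/
open MvPolynomial

/-- The frozen argument bracket at `a ∈ g*` (coordinates of `a` in the dual basis). -/
noncomputable def frozenBracket (n : ℕ) (c : Fin n → Fin n → Fin n → ℂ)
    (a : Fin n → ℂ) (f g : MvPolynomial (Fin n) ℂ) : MvPolynomial (Fin n) ℂ :=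
  ∑ i : Fin n, ∑ j : Fin n,
    C (∑ k : Fin n, c i j k * a k) * pderiv i f * pderiv j g

/-- `f` is a semi-invariant: there is a character `χ` of `g` (vanishing on `[g,g]`)
with `{f,h} = χ(dh)·f` for all `h`. -/
def IsSemiInvariant (n : ℕ) (c : Fin n → Fin n → Fin n → ℂ)
    (f : MvPolynomial (Fin n) ℂ) : Prop :=
  ∃ χ : Fin n → ℂ, (∀ i j, ∑ k, c i j k * χ k = 0) ∧
    ∀ h : MvPolynomial (Fin n) ℂ,
      poissonBracket n c f h = (∑ i, C (χ i) * pderiv i h) * f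

/-- The shifted polynomial `x ↦ g(a + λx)`. -/
noncomputable def shiftPoly (n : ℕ) (a : Fin n → ℂ) (l : ℂ)
    (g : MvPolynomial (Fin n) ℂ) : MvPolynomial (Fin n) ℂ :=
  bind₁ (fun k => C (a k) + C l * X k) g

namespace Stmt3Aux

variable {n : ℕ}

/-- The constant-coefficient derivation attached to a character `χ`. -/
noncomputable def Dop (χ : Fin n → ℂ) (p : MvPolynomial (Fin n) ℂ) : MvPolynomial (Fin n) ℂ :=
  ∑ i, C (χ i) * pderiv i p

lemma Dop_zero (χ : Fin n → ℂ) : Dop χ 0 = 0 := by simp [Dop]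

lemma Dop_add (χ : Fin n → ℂ) (p q : MvPolynomial (Fin n) ℂ) :
    Dop χ (p + q) = Dop χ p + Dop χ q := by
  simp [Dop, mul_add, Finset.sum_add_distrib]

lemma Dop_sum (χ : Fin n → ℂ) {α : Type*} (s : Finset α) (f : α → MvPolynomial (Fin n) ℂ) :
    Dop χ (∑ x ∈ s, f x) = ∑ x ∈ s, Dop χ (f x) := by
  simp only [Dop, map_sum, Finset.mul_sum]
  exact Finset.sum_comm

lemma Dop_mul (χ : Fin n → ℂ) (p q : MvPolynomial (Fin n) ℂ) :
    Dop χ (p * q) = Dop χ p * q + p * Dop χ q := by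
  simp only [Dop, pderiv_mul, mul_add, Finset.sum_add_distrib, Finset.sum_mul, Finset.mul_sum]
  congr 1
  · exact Finset.sum_congr rfl fun i _ => by ring
  · exact Finset.sum_congr rfl fun i _ => by ring

lemma Dop_C (χ : Fin n → ℂ) (a : ℂ) : Dop χ (C a) = 0 := by simp [Dop]

lemma Dop_X (χ : Fin n → ℂ) (j : Fin n) : Dop χ (X j) = C (χ j) := by
  unfold Dop
  rw [Finset.sum_eq_single j]
  · simp
  · intro b _ hb; simp [pderiv_X_of_ne hb.symm]
  · simp

lemma pderiv_pderiv_comm (i j : Fin n) (p : MvPolynomial (Fin n) ℂ) :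
    pderiv i (pderiv j p) = pderiv j (pderiv i p) := by
  induction p using MvPolynomial.induction_on with
  | C a => simp
  | add p q hp hq => simp [hp, hq]
  | mul_X p k hp =>
    simp only [pderiv_mul, map_add, hp, pderiv_X, Pi.single_apply]
    split_ifs <;> simp <;> ring

lemma pderiv_Dop (χ : Fin n → ℂ) (i : Fin n) (p : MvPolynomial (Fin n) ℂ) :
    pderiv i (Dop χ p) = Dop χ (pderiv i p) := by
  unfold Dop
  rw [map_sum]
  refine Finset.sum_congr rfl fun j _ => ?_
  rw [pderiv_C_mul, pderiv_pderiv_comm]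

lemma Dop_Dop_comm (χ μ : Fin n → ℂ) (p : MvPolynomial (Fin n) ℂ) :
    Dop χ (Dop μ p) = Dop μ (Dop χ p) := by
  unfold Dop
  simp only [map_sum, pderiv_C_mul, Finset.mul_sum]
  rw [Finset.sum_comm]
  refine Finset.sum_congr rfl fun i _ => Finset.sum_congr rfl fun j _ => ?_
  rw [pderiv_pderiv_comm]
  ring

lemma pderiv_structure (c : Fin n → Fin n → Fin n → ℂ) (i j m : Fin n) :
    pderiv m (∑ k, C (c i j k) * X k) = C (c i j m) := by
  rw [map_sum, Finset.sum_eq_single m]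
  · simp [pderiv_C_mul]
  · intro b _ hb; simp [pderiv_C_mul, pderiv_X_of_ne hb]
  · simp

lemma Dop_structure (c : Fin n → Fin n → Fin n → ℂ) (χ : Fin n → ℂ)
    (hχ : ∀ i j, ∑ k, c i j k * χ k = 0) (i j : Fin n) :
    Dop χ (∑ k, C (c i j k) * X k) = 0 := by
  unfold Dop
  simp only [pderiv_structure, ← map_mul, ← map_sum]
  rw [show (∑ k, χ k * c i j k) = ∑ k, c i j k * χ k from
    Finset.sum_congr rfl fun k _ => mul_comm _ _, hχ i j, map_zero]

/-- Skew-symmetry of the Poisson bracket. -/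
lemma pb_skew (c : Fin n → Fin n → Fin n → ℂ) (hskew : ∀ i j k, c i j k = - c j i k)
    (F G : MvPolynomial (Fin n) ℂ) :
    poissonBracket n c F G = - poissonBracket n c G F := by
  unfold poissonBracket
  rw [← Finset.sum_neg_distrib]
  rw [Finset.sum_comm]
  refine Finset.sum_congr rfl fun i _ => ?_
  rw [← Finset.sum_neg_distrib]
  refine Finset.sum_congr rfl fun j _ => ?_
  have : (∑ k, C (c i j k) * X k : MvPolynomial (Fin n) ℂ)
      = - ∑ k, C (c j i k) * X k := by
    rw [← Finset.sum_neg_distrib]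
    refine Finset.sum_congr rfl fun k _ => ?_
    rw [hskew i j k, map_neg]
    ring
  rw [this]
  ring

/-- `Dop χ` is a derivation of the Poisson bracket when `χ` kills `[g,g]`. -/
lemma Dop_pb (c : Fin n → Fin n → Fin n → ℂ) (χ : Fin n → ℂ)
    (hχ : ∀ i j, ∑ k, c i j k * χ k = 0) (F G : MvPolynomial (Fin n) ℂ) :
    Dop χ (poissonBracket n c F G) =
      poissonBracket n c (Dop χ F) G + poissonBracket n c F (Dop χ G) := by
  unfold poissonBracket
  rw [Dop_sum, ← Finset.sum_add_distrib]
  refine Finset.sum_congr rfl fun i _ => ?_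
  rw [Dop_sum, ← Finset.sum_add_distrib]
  refine Finset.sum_congr rfl fun j _ => ?_
  rw [Dop_mul, Dop_mul, Dop_structure c χ hχ, pderiv_Dop, pderiv_Dop]
  ring

end Stmt3Aux

namespace Stmt3Aux

/-- If `g` is a semi-invariant with weight `μ` and `χ` is a character, then
`Dop χ g` is again a semi-invariant with weight `μ`. -/
lemma semiinv_Dop (c : Fin n → Fin n → Fin n → ℂ) (χ μ : Fin n → ℂ)
    (hχ : ∀ i j, ∑ k, c i j k * χ k = 0) (g : MvPolynomial (Fin n) ℂ)
    (Hg : ∀ h, poissonBracket n c g h = Dop μ h * g) :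
    ∀ h, poissonBracket n c (Dop χ g) h = Dop μ h * Dop χ g := by
  intro h
  have key := Dop_pb c χ hχ g h
  rw [Hg h, Hg (Dop χ h), Dop_mul, Dop_Dop_comm] at key
  linear_combination -key

lemma Dop_totalDegree_lt (χ : Fin n → ℂ) (p : MvPolynomial (Fin n) ℂ)
    (hp : 0 < p.totalDegree) : (Dop χ p).totalDegree < p.totalDegree := by
  have hpd : ∀ i : Fin n, (pderiv i p).totalDegree < p.totalDegree := by
    intro i
    conv_lhs => rw [p.as_sum]
    rw [map_sum]
    refine lt_of_le_of_lt (totalDegree_finset_sum _ _) ?_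
    rw [Finset.sup_lt_iff (by simpa using hp)]
    intro s hs
    rw [pderiv_monomial]
    by_cases hsi : s i = 0
    · rw [hsi]
      simp only [Nat.cast_zero, mul_zero, map_zero, totalDegree_zero]
      exact hp
    · refine lt_of_le_of_lt (totalDegree_monomial_le _ _) ?_
      have h1 : Finsupp.single i 1 ≤ s := by
        rwa [Finsupp.single_le_iff, Nat.one_le_iff_ne_zero]
      have h2 : (s - Finsupp.single i 1) + Finsupp.single i 1 = s := tsub_add_cancel_of_le h1
      have h3 : s.sum (fun _ e => e) = (s - Finsupp.single i 1).sum (fun _ e => e) + 1 := by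
        conv_lhs => rw [← h2]
        rw [Finsupp.sum_add_index' (fun _ => rfl) (fun _ _ _ => rfl)]
        simp [Finsupp.sum_single_index]
      have h4 := le_totalDegree hs
      have h5 : ((s - Finsupp.single i 1).sum fun _ => id)
          = ((s - Finsupp.single i 1).sum fun _ e => e) := rfl
      omega
  refine lt_of_le_of_lt (totalDegree_finset_sum _ _) ?_
  rw [Finset.sup_lt_iff (by simpa using hp)]
  intro i _
  refine lt_of_le_of_lt (totalDegree_mul _ _) ?_
  rw [totalDegree_C, zero_add]
  exact hpd i

lemma pderiv_of_constant (i : Fin n) (p : MvPolynomial (Fin n) ℂ)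
    (hp : p.totalDegree = 0) : pderiv i p = 0 := by
  rw [totalDegree_eq_zero_iff] at hp
  conv_lhs => rw [p.as_sum]
  rw [map_sum]
  refine Finset.sum_eq_zero fun s hs => ?_
  rw [pderiv_monomial, hp s hs i]
  simp

lemma Dop_of_constant (χ : Fin n → ℂ) (p : MvPolynomial (Fin n) ℂ)
    (hp : p.totalDegree = 0) : Dop χ p = 0 := by
  unfold Dop
  refine Finset.sum_eq_zero fun i _ => ?_
  rw [pderiv_of_constant i p hp, mul_zero]

/-- From a nonzero semi-invariant `g` of weight `μ` we extract a nonzero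
semi-invariant `w` of the same weight that is annihilated by `Dop χ`. -/
lemma exists_w (c : Fin n → Fin n → Fin n → ℂ) (χ μ : Fin n → ℂ)
    (hχ : ∀ i j, ∑ k, c i j k * χ k = 0) :
    ∀ d : ℕ, ∀ g : MvPolynomial (Fin n) ℂ, g.totalDegree ≤ d → g ≠ 0 →
      (∀ h, poissonBracket n c g h = Dop μ h * g) →
      ∃ w : MvPolynomial (Fin n) ℂ, w ≠ 0 ∧
        (∀ h, poissonBracket n c w h = Dop μ h * w) ∧ Dop χ w = 0 := by
  intro d
  induction d with
  | zero =>
    intro g hdeg hg0 Hg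
    exact ⟨g, hg0, Hg, Dop_of_constant χ g (Nat.le_zero.mp hdeg)⟩
  | succ d ih =>
    intro g hdeg hg0 Hg
    by_cases hD : Dop χ g = 0
    · exact ⟨g, hg0, Hg, hD⟩
    · have hpos : 0 < g.totalDegree := by
        rcases Nat.eq_zero_or_pos g.totalDegree with h | h
        · exact absurd (Dop_of_constant χ g h) hD
        · exact h
      have hlt := Dop_totalDegree_lt χ g hpos
      exact ih (Dop χ g) (by omega) hD (semiinv_Dop c χ μ hχ g Hg)

/-- The key vanishing: if `f ≠ 0` is a semi-invariant with character `χ`,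
and `g` is any semi-invariant, then `Dop χ g = 0`. -/
lemma Dop_semiinv_eq_zero (c : Fin n → Fin n → Fin n → ℂ)
    (hskew : ∀ i j k, c i j k = - c j i k)
    (f : MvPolynomial (Fin n) ℂ) (hf0 : f ≠ 0) (χ : Fin n → ℂ)
    (hχ : ∀ i j, ∑ k, c i j k * χ k = 0)
    (Hf : ∀ h, poissonBracket n c f h = Dop χ h * f)
    (g : MvPolynomial (Fin n) ℂ) (μ : Fin n → ℂ)
    (Hg : ∀ h, poissonBracket n c g h = Dop μ h * g) :
    Dop χ g = 0 := by
  by_cases hg0 : g = 0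
  · rw [hg0]; exact Dop_zero χ
  obtain ⟨w, hw0, Hw, hDw⟩ :=
    exists_w c χ μ hχ g.totalDegree g le_rfl hg0 Hg
  -- pb f w = 0 since Dop χ w = 0
  have h1 : poissonBracket n c f w = 0 := by rw [Hf w, hDw, zero_mul]
  -- skew symmetry gives pb w f = 0, hence (Dop μ f) * w = 0
  have h2 : Dop μ f * w = 0 := by
    rw [← Hw f, pb_skew c hskew w f, h1, neg_zero]
  have h3 : Dop μ f = 0 := by
    rcases mul_eq_zero.mp h2 with h | h
    · exact h
    · exact absurd h hw0
  -- hence pb g f = 0, so pb f g = 0, so (Dop χ g) * f = 0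
  have h4 : poissonBracket n c g f = 0 := by rw [Hg f, h3, zero_mul]
  have h5 : Dop χ g * f = 0 := by
    rw [← Hf g, pb_skew c hskew f g, h4, neg_zero]
  rcases mul_eq_zero.mp h5 with h | h
  · exact h
  · exact absurd h hf0

/-- Chain rule for the affine substitution. -/
lemma Dop_bind (χ : Fin n → ℂ) (a : Fin n → ℂ) (l : ℂ) (g : MvPolynomial (Fin n) ℂ) :
    Dop χ (bind₁ (fun k => C (a k) + C l * X k) g)
      = C l * bind₁ (fun k => C (a k) + C l * X k) (Dop χ g) := by
  induction g using MvPolynomial.induction_on with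
  | C r => rw [bind₁_C_right, Dop_C, map_zero, mul_zero]
  | add p q hp hq => rw [map_add, Dop_add, hp, hq, Dop_add, map_add, mul_add]
  | mul_X p j hp =>
    simp only [map_mul, map_add, bind₁_X_right, bind₁_C_right, Dop_mul, Dop_add,
      Dop_C, Dop_X, hp]
    ring

end Stmt3Aux


theorem stmt3 (n : ℕ) (c : Fin n → Fin n → Fin n → ℂ)
    (hskew : ∀ i j k, c i j k = - c j i k)
    (hjacobi : ∀ i j l m, (∑ k, c i j k * c k l m) + (∑ k, c j l k * c k i m) +
      (∑ k, c l i k * c k j m) = 0)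
    (f g : MvPolynomial (Fin n) ℂ)
    (hf : IsSemiInvariant n c f) (hg : IsSemiInvariant n c g)
    (a : Fin n → ℂ) (l : ℂ) :
    poissonBracket n c f (shiftPoly n a l g) = 0 := by
  obtain ⟨χf, hχf, Hf⟩ := hf
  obtain ⟨χg, hχg, Hg⟩ := hg
  have Hf' : ∀ h, poissonBracket n c f h = Stmt3Aux.Dop χf h * f := Hf
  have Hg' : ∀ h, poissonBracket n c g h = Stmt3Aux.Dop χg h * g := Hg
  rw [Hf' (shiftPoly n a l g)]
  by_cases hf0 : f = 0
  · rw [hf0, mul_zero]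
  · have hD : Stmt3Aux.Dop χf g = 0 :=
      Stmt3Aux.Dop_semiinv_eq_zero c hskew f hf0 χf hχf Hf' g χg Hg'
    have : Stmt3Aux.Dop χf (shiftPoly n a l g) = 0 := by
      unfold shiftPoly
      rw [Stmt3Aux.Dop_bind, hD, map_zero, mul_zero]
    rw [this, zero_mul]
end

section
/- Let f, g be semi-invariants of a finite-dimensional complex Lie algebra g, a ∈ g*, and λ ∈ ℂ*. Then the shifted polynomial h(x) = g(a + λx) satisfies {f, h}_a = 0, where {F,G}_a(x) = ⟨a, [dF(x), dG(x)]⟩ is the frozen argument bracket. -/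
open MvPolynomial

/-! Write `D_χ h = χ(dh)` for the derivative in a constant direction `χ ∈ g`. For a
semi-invariant `g` of character `χ_g`, testing semi-invariance against the coordinate functions
gives `∑ⱼ ⟨x, [eᵢ, eⱼ]⟩ ∂ⱼg = -χ_g(eᵢ) g`. Substituting `x ↦ a + λx` turns the coefficient
`⟨x, [eᵢ, eⱼ]⟩` into `⟨a, [eᵢ, eⱼ]⟩ + λ⟨x, [eᵢ, eⱼ]⟩`, whence
`{f, h}_a + λ{f, h} = -λ (D_{χ_g} f) h` for `h(x) = g(a + λx)`. Both remaining terms vanish: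
`{f, h} = (D_{χ_f} h) f = λ (D_{χ_f} g)(a + λx) f`, and `D_{χ_f} g = D_{χ_g} f = 0` for nonzero
semi-invariants. The latter holds by induction on the degree of `g`: `D_{χ_f}` is a derivation
of the Poisson bracket (`χ_f` kills `[g, g]`), so `D_{χ_f} g` is again a semi-invariant of
character `χ_g`, of lower degree; and if `D_{χ_f} g = 0` then `{f, g} = 0`, hence
`(D_{χ_g} f) g = {g, f} = 0`. -/

section ConstantCoefficientDerivations

variable {σ R : Type*} [CommRing R]

theorem derivation_comm_of_apply_X_eq_C (D₁ D₂ : Derivation R (MvPolynomial σ R) (MvPolynomial σ R))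
    (h₁ : ∀ k, ∃ r, D₁ (X k) = C r) (h₂ : ∀ k, ∃ r, D₂ (X k) = C r) (p : MvPolynomial σ R) :
    D₁ (D₂ p) = D₂ (D₁ p) := by
  have hcomm : ⁅D₁, D₂⁆ = 0 := derivation_ext fun k => by
    obtain ⟨r₁, hr₁⟩ := h₁ k
    obtain ⟨r₂, hr₂⟩ := h₂ k
    simp [Derivation.commutator_apply, hr₁, hr₂, derivation_C]
  simpa [Derivation.commutator_apply, sub_eq_zero] using congr($hcomm p)

theorem pderiv_X_eq_C (i k : σ) : ∃ r, pderiv i (X k : MvPolynomial σ R) = C r := by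
  rcases eq_or_ne k i with rfl | h
  · exact ⟨1, by simp⟩
  · exact ⟨0, by simp [pderiv_X_of_ne h]⟩

noncomputable def dirDeriv (χ : σ → R) : Derivation R (MvPolynomial σ R) (MvPolynomial σ R) :=
  mkDerivation R fun i => C (χ i)

theorem dirDeriv_X (χ : σ → R) (k : σ) : dirDeriv χ (X k) = C (χ k) :=
  mkDerivation_X _ _ _

theorem dirDeriv_apply [Fintype σ] (χ : σ → R) (p : MvPolynomial σ R) :
    dirDeriv χ p = ∑ i, C (χ i) * pderiv i p := by
  have : dirDeriv χ = ∑ i, (C (χ i) : MvPolynomial σ R) • pderiv i := derivation_ext fun k => by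
    classical
    change _ = Derivation.coeFnAddMonoidHom _ _
    simp [map_sum, dirDeriv_X, pderiv_X, Pi.single_apply]
  rw [this]
  change Derivation.coeFnAddMonoidHom _ _ = _
  simp [map_sum]

theorem pderiv_dirDeriv_comm (χ : σ → R) (i : σ) (p : MvPolynomial σ R) :
    pderiv i (dirDeriv χ p) = dirDeriv χ (pderiv i p) :=
  derivation_comm_of_apply_X_eq_C _ _ (pderiv_X_eq_C i) (fun k => ⟨_, dirDeriv_X χ k⟩) p

theorem dirDeriv_comm (χ ψ : σ → R) (p : MvPolynomial σ R) :
    dirDeriv χ (dirDeriv ψ p) = dirDeriv ψ (dirDeriv χ p) :=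
  derivation_comm_of_apply_X_eq_C _ _ (fun k => ⟨_, dirDeriv_X χ k⟩) (fun k => ⟨_, dirDeriv_X ψ k⟩) p

theorem totalDegree_pderiv_le (i : σ) (p : MvPolynomial σ R) :
    (pderiv i p).totalDegree ≤ p.totalDegree - 1 := by
  refine Finset.sup_le fun m hm => ?_
  have hcoeff : coeff (m + Finsupp.single i 1) p ≠ 0 := by
    intro h
    rw [mem_support_iff, coeff_pderiv, h, zero_mul] at hm
    exact hm rfl
  have := le_totalDegree (mem_support_iff.mpr hcoeff)
  change Finsupp.degree (m + Finsupp.single i 1) ≤ _ at this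
  change Finsupp.degree m ≤ _
  simp only [map_add, Finsupp.degree_single] at this
  omega

theorem totalDegree_dirDeriv_lt [Fintype σ] (χ : σ → R) {p : MvPolynomial σ R}
    (h : dirDeriv χ p ≠ 0) : (dirDeriv χ p).totalDegree < p.totalDegree := by
  have hp : p.totalDegree ≠ 0 := fun h0 => h <| by
    rw [totalDegree_eq_zero_iff_eq_C.mp h0, derivation_C]
  have hle : (dirDeriv χ p).totalDegree ≤ p.totalDegree - 1 := by
    rw [dirDeriv_apply]
    refine totalDegree_finsetSum_le fun i _ => (totalDegree_mul _ _).trans ?_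
    rw [totalDegree_C, zero_add]
    exact totalDegree_pderiv_le i p
  omega

end ConstantCoefficientDerivations

section LiePoisson

variable {n : ℕ} {c : Fin n → Fin n → Fin n → ℂ}

def IsSemiInvariantOfChar (n : ℕ) (c : Fin n → Fin n → Fin n → ℂ) (χ : Fin n → ℂ)
    (f : MvPolynomial (Fin n) ℂ) : Prop :=
  ∀ h, poissonBracket n c f h = dirDeriv χ h * f

theorem isSemiInvariant_iff {f : MvPolynomial (Fin n) ℂ} :
    IsSemiInvariant n c f ↔
      ∃ χ, (∀ i j, ∑ k, c i j k * χ k = 0) ∧ IsSemiInvariantOfChar n c χ f := by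
  simp only [IsSemiInvariant, IsSemiInvariantOfChar, dirDeriv_apply]

theorem poissonBracket_swap (hskew : ∀ i j k, c i j k = - c j i k)
    (p q : MvPolynomial (Fin n) ℂ) :
    poissonBracket n c q p = - poissonBracket n c p q := by
  unfold poissonBracket
  rw [Finset.sum_comm, ← Finset.sum_neg_distrib]
  refine Finset.sum_congr rfl fun i _ => ?_
  rw [← Finset.sum_neg_distrib]
  refine Finset.sum_congr rfl fun j _ => ?_
  simp only [hskew j i, map_neg, neg_mul, Finset.sum_neg_distrib]
  ring

theorem dirDeriv_poissonBracket {χ : Fin n → ℂ} (hχ : ∀ i j, ∑ k, c i j k * χ k = 0)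
    (p q : MvPolynomial (Fin n) ℂ) :
    dirDeriv χ (poissonBracket n c p q) =
      poissonBracket n c (dirDeriv χ p) q + poissonBracket n c p (dirDeriv χ q) := by
  have hlin : ∀ i j, dirDeriv χ (∑ k, C (c i j k) * X k) = 0 := fun i j => by
    simp only [map_sum, Derivation.leibniz, derivation_C, dirDeriv_X, smul_eq_mul, mul_zero,
      add_zero, ← map_mul]
    rw [← map_sum, hχ i j, map_zero]
  simp only [poissonBracket, map_sum, ← Finset.sum_add_distrib, Derivation.leibniz, hlin,
    ← pderiv_dirDeriv_comm, smul_eq_mul]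
  refine Finset.sum_congr rfl fun i _ => Finset.sum_congr rfl fun j _ => ?_
  ring

theorem isSemiInvariantOfChar_dirDeriv {χ ψ : Fin n → ℂ} {p : MvPolynomial (Fin n) ℂ}
    (hp : IsSemiInvariantOfChar n c χ p) (hψ : ∀ i j, ∑ k, c i j k * ψ k = 0) :
    IsSemiInvariantOfChar n c χ (dirDeriv ψ p) := fun h => by
  have e := dirDeriv_poissonBracket hψ p h
  rw [hp h, hp (dirDeriv ψ h), Derivation.leibniz, dirDeriv_comm, smul_eq_mul, smul_eq_mul] at e
  linear_combination -e

theorem dirDeriv_eq_zero_of_isSemiInvariantOfChar (hskew : ∀ i j k, c i j k = - c j i k)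
    {χf χg : Fin n → ℂ} {f g : MvPolynomial (Fin n) ℂ} (hχf : ∀ i j, ∑ k, c i j k * χf k = 0)
    (hf : IsSemiInvariantOfChar n c χf f) (hg : IsSemiInvariantOfChar n c χg g) (hg0 : g ≠ 0) :
    dirDeriv χg f = 0 := by
  induction hd : g.totalDegree using Nat.strong_induction_on generalizing g with
  | _ d ih =>
    by_cases hDg : dirDeriv χf g = 0
    · have hgf : dirDeriv χg f * g = 0 := by
        rw [← hg f, poissonBracket_swap hskew, hf g, hDg, zero_mul, neg_zero]
      exact (mul_eq_zero.mp hgf).resolve_right hg0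
    · exact ih _ (hd ▸ totalDegree_dirDeriv_lt χf hDg) (isSemiInvariantOfChar_dirDeriv hg hχf)
        hDg rfl

theorem poissonBracket_X_left (i : Fin n) (p : MvPolynomial (Fin n) ℂ) :
    poissonBracket n c (X i) p = ∑ j, (∑ k, C (c i j k) * X k) * pderiv j p := by
  unfold poissonBracket
  rw [Finset.sum_eq_single i (fun i' _ hi' => by simp [pderiv_X_of_ne hi'.symm]) (by simp)]
  simp

theorem pderiv_shiftPoly (a : Fin n → ℂ) (l : ℂ) (j : Fin n) (p : MvPolynomial (Fin n) ℂ) :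
    pderiv j (shiftPoly n a l p) = C l * shiftPoly n a l (pderiv j p) := by
  unfold shiftPoly
  induction p using MvPolynomial.induction_on with
  | C x => simp
  | add p q hp hq => simp only [map_add, hp, hq, mul_add]
  | mul_X p k hp =>
    have hX : pderiv j (C (a k) + C l * X k) =
        C l * bind₁ (fun k => C (a k) + C l * X k) (pderiv j (X k)) := by
      rcases eq_or_ne k j with rfl | hkj
      · simp
      · simp [pderiv_X_of_ne hkj]
    simp only [map_mul, bind₁_X_right, pderiv_mul, hp, hX, map_add]
    ring

theorem dirDeriv_shiftPoly (χ : Fin n → ℂ) (a : Fin n → ℂ) (l : ℂ) (p : MvPolynomial (Fin n) ℂ) :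
    dirDeriv χ (shiftPoly n a l p) = C l * shiftPoly n a l (dirDeriv χ p) := by
  simp only [dirDeriv_apply, pderiv_shiftPoly]
  unfold shiftPoly
  simp only [map_sum, map_mul, bind₁_C_right, Finset.mul_sum]
  exact Finset.sum_congr rfl fun i _ => by ring

theorem shiftPoly_sum_C_mul_X (a : Fin n → ℂ) (l : ℂ) (b : Fin n → ℂ) :
    shiftPoly n a l (∑ k, C (b k) * X k) = C (∑ k, b k * a k) + C l * ∑ k, C (b k) * X k := by
  simp only [shiftPoly, map_sum, map_mul, bind₁_C_right, bind₁_X_right, Finset.mul_sum,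
    ← Finset.sum_add_distrib]
  exact Finset.sum_congr rfl fun k _ => by ring

theorem frozenBracket_add_C_mul_poissonBracket_shiftPoly (a : Fin n → ℂ) (l : ℂ)
    (F g : MvPolynomial (Fin n) ℂ) :
    frozenBracket n c a F (shiftPoly n a l g) + C l * poissonBracket n c F (shiftPoly n a l g) =
      C l * ∑ i, pderiv i F * shiftPoly n a l (poissonBracket n c (X i) g) := by
  have hsum : ∀ p : Fin n → MvPolynomial (Fin n) ℂ,
      shiftPoly n a l (∑ j, p j) = ∑ j, shiftPoly n a l (p j) := fun p => map_sum (bind₁ _) p _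
  have hterm : ∀ i j, shiftPoly n a l ((∑ k, C (c i j k) * X k) * pderiv j g) =
      (C (∑ k, c i j k * a k) + C l * ∑ k, C (c i j k) * X k) * shiftPoly n a l (pderiv j g) :=
    fun i j => by rw [← shiftPoly_sum_C_mul_X]; exact map_mul (bind₁ _) _ _
  simp only [poissonBracket_X_left, hsum, hterm]
  simp only [frozenBracket, poissonBracket, pderiv_shiftPoly, map_sum, Finset.mul_sum,
    Finset.sum_mul, add_mul, ← Finset.sum_add_distrib]
  exact Finset.sum_congr rfl fun i _ => Finset.sum_congr rfl fun j _ =>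
    Finset.sum_congr rfl fun k _ => by ring

theorem frozenBracket_shiftPoly_of_isSemiInvariantOfChar (hskew : ∀ i j k, c i j k = - c j i k)
    {χ : Fin n → ℂ} {g : MvPolynomial (Fin n) ℂ} (hg : IsSemiInvariantOfChar n c χ g)
    (a : Fin n → ℂ) (l : ℂ) (F : MvPolynomial (Fin n) ℂ) :
    frozenBracket n c a F (shiftPoly n a l g) + C l * poissonBracket n c F (shiftPoly n a l g) =
      -(C l * dirDeriv χ F * shiftPoly n a l g) := by
  have hX : ∀ i, shiftPoly n a l (poissonBracket n c (X i) g) = -(C (χ i) * shiftPoly n a l g) :=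
    fun i => by
      rw [poissonBracket_swap hskew, hg, dirDeriv_X]
      simp only [shiftPoly, map_neg, map_mul, bind₁_C_right]
  rw [frozenBracket_add_C_mul_poissonBracket_shiftPoly, dirDeriv_apply]
  simp only [hX, Finset.mul_sum, Finset.sum_mul, ← Finset.sum_neg_distrib]
  exact Finset.sum_congr rfl fun i _ => by ring

end LiePoisson

theorem stmt4_general (n : ℕ) (c : Fin n → Fin n → Fin n → ℂ)
    (hskew : ∀ i j k, c i j k = - c j i k)
    (f g : MvPolynomial (Fin n) ℂ)
    (hf : IsSemiInvariant n c f) (hg : IsSemiInvariant n c g)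
    (a : Fin n → ℂ) (l : ℂ) :
    frozenBracket n c a f (shiftPoly n a l g) = 0 := by
  obtain ⟨χf, hχf, hf⟩ := isSemiInvariant_iff.mp hf
  obtain ⟨χg, hχg, hg⟩ := isSemiInvariant_iff.mp hg
  rcases eq_or_ne f 0 with rfl | hf0
  · simp [frozenBracket]
  rcases eq_or_ne g 0 with rfl | hg0
  · simp [frozenBracket, shiftPoly]
  have hDfg : dirDeriv χf g = 0 := dirDeriv_eq_zero_of_isSemiInvariantOfChar hskew hχg hg hf hf0
  have hDgf : dirDeriv χg f = 0 := dirDeriv_eq_zero_of_isSemiInvariantOfChar hskew hχf hf hg hg0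
  have hpb : poissonBracket n c f (shiftPoly n a l g) = 0 := by
    rw [hf, dirDeriv_shiftPoly, hDfg]
    simp [shiftPoly]
  have key := frozenBracket_shiftPoly_of_isSemiInvariantOfChar hskew hg a l f
  rw [hpb, hDgf] at key
  linear_combination key

theorem stmt4 (n : ℕ) (c : Fin n → Fin n → Fin n → ℂ)
    (hskew : ∀ i j k, c i j k = - c j i k)
    (hjacobi : ∀ i j l m, (∑ k, c i j k * c k l m) + (∑ k, c j l k * c k i m) +
      (∑ k, c l i k * c k j m) = 0)
    (f g : MvPolynomial (Fin n) ℂ)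
    (hf : IsSemiInvariant n c f) (hg : IsSemiInvariant n c g)
    (a : Fin n → ℂ) (l : ℂ) (hl : l ≠ 0) :
    frozenBracket n c a f (shiftPoly n a l g) = 0 :=
  stmt4_general n c hskew f g hf hg a l
end

section
/- Let h be a finite-dimensional complex Lie algebra whose derived algebra [h,h] has dimension at most 1. Then h is isomorphic either to an Abelian Lie algebra, or to b₂ ⊕ A (b₂ the two-dimensional non-Abelian Lie algebra, A Abelian), or to h_{2n+1} ⊕ A (h_{2n+1} the (2n+1)-dimensional Heisenberg algebra, A Abelian). -/
/-! Model Lie algebras: `b₂ ⊕ ℂᵐ` realised on `ℂ × ℂ × (Fin m → ℂ)` with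
`[(a₁,b₁,u₁),(a₂,b₂,u₂)] = (0, a₁b₂ - a₂b₁, 0)`, and the Heisenberg algebra plus an
abelian part, `h_{2n+1} ⊕ ℂᵐ`, realised on `(Fin n → ℂ) × (Fin n → ℂ) × ℂ × (Fin m → ℂ)`
with `[(p,q,z,u),(p',q',z',u')] = (0, 0, Σᵢ pᵢq'ᵢ - p'ᵢqᵢ, 0)`. -/

noncomputable instance b2aLieRing (m : ℕ) : LieRing (ℂ × ℂ × (Fin m → ℂ)) :=
  { (inferInstance : AddCommGroup (ℂ × ℂ × (Fin m → ℂ))) with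
    bracket := fun x y => (0, x.1 * y.2.1 - y.1 * x.2.1, 0)
    add_lie := by intro x y z; simp [Prod.ext_iff]; ring
    lie_add := by intro x y z; simp [Prod.ext_iff]; ring
    lie_self := by intro x; simp [Prod.ext_iff]
    leibniz_lie := by intro x y z; simp [Prod.ext_iff]; ring }

noncomputable instance b2aLieAlgebra (m : ℕ) : LieAlgebra ℂ (ℂ × ℂ × (Fin m → ℂ)) :=
  { lie_smul := by intro t x y; simp [Bracket.bracket, Prod.ext_iff]; ring }

noncomputable instance heisALieRing (n m : ℕ) :
    LieRing ((Fin n → ℂ) × (Fin n → ℂ) × ℂ × (Fin m → ℂ)) :=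
  { (inferInstance : AddCommGroup ((Fin n → ℂ) × (Fin n → ℂ) × ℂ × (Fin m → ℂ))) with
    bracket := fun x y => (0, 0, ∑ i, (x.1 i * y.2.1 i - y.1 i * x.2.1 i), 0)
    add_lie := by
      intro x y z
      simp [Prod.ext_iff, add_mul, mul_add, Finset.sum_add_distrib]
      ring
    lie_add := by
      intro x y z
      simp [Prod.ext_iff, add_mul, mul_add, Finset.sum_add_distrib]
      ring
    lie_self := by intro x; simp [Prod.ext_iff]
    leibniz_lie := by intro x y z; simp [Prod.ext_iff] }

noncomputable instance heisALieAlgebra (n m : ℕ) :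
    LieAlgebra ℂ ((Fin n → ℂ) × (Fin n → ℂ) × ℂ × (Fin m → ℂ)) :=
  { lie_smul := by
      intro t x y
      simp [Bracket.bracket, Prod.ext_iff, Finset.mul_sum, mul_sub,
        mul_comm, mul_left_comm, mul_assoc] }

/-!
Choose `z` spanning `[h, h]`, so that `⁅x, y⁆ = B x y • z` for an alternating form `B`. Reading the
Jacobi identity in the coefficient of `z` gives `B y w * B x z = B x y * B z w + B x w * B y z`.
If `z` is not central, pick `e` with `B e z = 1`: then `B = φ ∧ ψ` for `φ = B · z` and `ψ = B e`,
and completing `(φ, ψ)` to coordinates of `h` exhibits `b₂ ⊕ ℂᵐ`. If `z` is central, Darboux's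
theorem for the (possibly degenerate) form `B` gives symplectic coordinates `p, q` vanishing on `z`;
together with a functional `ξ` with `ξ z = 1` they complete to coordinates exhibiting
`h_{2n+1} ⊕ ℂᵐ`, and `n ≥ 1` because `h` is not abelian.
-/

open Module

section Symplectic

variable {K V : Type*} [Field K] [AddCommGroup V] [Module K V]

def stdSymplectic {n : ℕ} (a b : (Fin n → K) × (Fin n → K)) : K :=
  ∑ i, (a.1 i * b.2 i - b.1 i * a.2 i)

theorem stdSymplectic_cons {n : ℕ} (a b : (Fin (n + 1) → K) × (Fin (n + 1) → K)) :
    stdSymplectic a b = a.1 0 * b.2 0 - b.1 0 * a.2 0 +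
      stdSymplectic (Fin.tail a.1, Fin.tail a.2) (Fin.tail b.1, Fin.tail b.2) := by
  simp only [stdSymplectic, Fin.sum_univ_succ, Fin.tail]

theorem eq_zero_of_forall_stdSymplectic_eq_zero {n : ℕ} {a : (Fin n → K) × (Fin n → K)}
    (ha : ∀ b, stdSymplectic a b = 0) : a = 0 := by
  refine Prod.ext (funext fun i => ?_) (funext fun i => ?_)
  · simpa [stdSymplectic, Pi.single_apply] using ha (0, Pi.single i 1)
  · simpa [stdSymplectic, Pi.single_apply] using ha (Pi.single i 1, 0)

namespace LinearMap.BilinForm.IsAlt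

variable {B : LinearMap.BilinForm K V}

-- `x + B v x • u - B u x • v` is the projection of `x` onto the `B`-orthogonal of `span {u, v}`.
theorem apply_eq_add_apply_sub (hB : B.IsAlt) {u v : V} (huv : B u v = 1) (x y : V) :
    B x y = B u x * B v y - B u y * B v x +
      B (x + B v x • u - B u x • v) (y + B v y • u - B u y • v) := by
  have hvu : B v u = -1 := by rw [← hB.neg_eq u v, huv]
  have hxu := hB.neg_eq u x
  have hxv := hB.neg_eq v x
  simp only [map_add, map_sub, map_smul, LinearMap.add_apply, LinearMap.sub_apply,
    LinearMap.smul_apply, smul_eq_mul, hB.self_eq_zero u, hB.self_eq_zero v, huv, hvu, ← hxu, ← hxv]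
  ring

theorem exists_surjective_stdSymplectic [FiniteDimensional K V] (hB : B.IsAlt) :
    ∃ (n : ℕ) (f : V →ₗ[K] (Fin n → K) × (Fin n → K)),
      Function.Surjective f ∧ ∀ x y, B x y = stdSymplectic (f x) (f y) := by
  induction hd : finrank K V using Nat.strong_induction_on generalizing V with
  | _ d ih =>
  by_cases hB0 : ∀ x y, B x y = 0
  · exact ⟨0, 0, Function.surjective_to_subsingleton _, fun x y => by simp [hB0, stdSymplectic]⟩
  push Not at hB0
  obtain ⟨u, v₀, huv₀⟩ := hB0
  set v := (B u v₀)⁻¹ • v₀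
  have huv : B u v = 1 := by simp [v, huv₀]
  have hvu : B v u = -1 := by rw [← hB.neg_eq u v, huv]
  set W := LinearMap.ker (B u) ⊓ LinearMap.ker (B v)
  have hW : finrank K W < d := by
    refine hd ▸ Submodule.finrank_lt fun hW => ?_
    have : u ∈ W := hW ▸ Submodule.mem_top
    simp [W, hvu] at this
  obtain ⟨n, f', hf', hBf'⟩ := ih _ hW (B := B.restrict W) (fun w => hB.self_eq_zero w) rfl
  let π : V →ₗ[K] W := (LinearMap.id + (B v).smulRight u - (B u).smulRight v).codRestrict W
    fun x => by simp [W, hB.self_eq_zero u, hB.self_eq_zero v, huv, hvu]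
  have hπ : ∀ x, (π x : V) = x + B v x • u - B u x • v := fun x => rfl
  let f : V →ₗ[K] (Fin (n + 1) → K) × (Fin (n + 1) → K) :=
    (LinearMap.pi (Fin.cons (B u) fun i => LinearMap.proj i ∘ₗ LinearMap.fst K _ _ ∘ₗ f' ∘ₗ π)).prod
      (LinearMap.pi (Fin.cons (B v) fun i => LinearMap.proj i ∘ₗ LinearMap.snd K _ _ ∘ₗ f' ∘ₗ π))
  have hf₀ : ∀ x, (f x).1 0 = B u x ∧ (f x).2 0 = B v x := fun x => ⟨rfl, rfl⟩
  have hf_tail : ∀ x, (Fin.tail (f x).1, Fin.tail (f x).2) = f' (π x) := fun x => rfl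
  refine ⟨n + 1, f, fun a => ?_, fun x y => ?_⟩
  · obtain ⟨w, hw⟩ := hf' (Fin.tail a.1, Fin.tail a.2)
    have hw₀ : B u w = 0 ∧ B v w = 0 := Submodule.mem_inf.mp w.2
    set x := a.1 0 • v - a.2 0 • u + (w : V)
    have hx₀ : B u x = a.1 0 ∧ B v x = a.2 0 := by
      simp [x, hw₀, huv, hvu, hB.self_eq_zero u, hB.self_eq_zero v]
    have hπx : π x = w := by
      ext1
      rw [hπ, hx₀.1, hx₀.2]
      simp only [x]
      abel
    have h := hf_tail x
    rw [hπx, hw, Prod.mk.injEq] at h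
    refine ⟨x, Prod.ext ?_ ?_⟩
    · rw [← Fin.cons_self_tail (f x).1, ← Fin.cons_self_tail a.1, (hf₀ x).1, hx₀.1, h.1]
    · rw [← Fin.cons_self_tail (f x).2, ← Fin.cons_self_tail a.2, (hf₀ x).2, hx₀.2, h.2]
  · rw [hB.apply_eq_add_apply_sub huv, stdSymplectic_cons, hf_tail, hf_tail, (hf₀ x).1, (hf₀ x).2,
      (hf₀ y).1, (hf₀ y).2, ← hBf']
    rfl

end LinearMap.BilinForm.IsAlt

end Symplectic

section Splitting

variable {K V W : Type*} [Field K] [AddCommGroup V] [Module K V] [AddCommGroup W] [Module K W]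

theorem LinearMap.exists_section_apply_eq {f : V →ₗ[K] W} (hf : Function.Surjective f) {z : V}
    (hz : f z ≠ 0) : ∃ s : W →ₗ[K] V, (∀ w, f (s w) = w) ∧ s (f z) = z := by
  obtain ⟨s₀, hs₀⟩ := f.exists_rightInverse_of_surjective (LinearMap.range_eq_top.mpr hf)
  have hs₀ (w : W) : f (s₀ w) = w := LinearMap.congr_fun hs₀ w
  obtain ⟨γ, hγ⟩ := Module.Projective.exists_dual_eq_one K hz
  refine ⟨s₀ + γ.smulRight (z - s₀ (f z)), fun w => ?_, ?_⟩
  · simp [hs₀]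
  · simp [hγ]

theorem LinearMap.exists_linearEquiv_prod_fin [FiniteDimensional K V] {f : V →ₗ[K] W}
    (hf : Function.Surjective f) {z : V} (hz : f z ≠ 0) :
    ∃ (m : ℕ) (E : V ≃ₗ[K] W × (Fin m → K)), (∀ x, (E x).1 = f x) ∧ E z = (f z, 0) := by
  obtain ⟨s, hs, hsz⟩ := exists_section_apply_eq hf hz
  let P : V →ₗ[K] ker f := (LinearMap.id - s ∘ₗ f).codRestrict (ker f) fun x => by simp [hs]
  have hP (x : V) : (P x : V) = x - s (f x) := rfl
  let κ := (Module.finBasis K (ker f)).equivFun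
  let E : V ≃ₗ[K] W × (Fin _ → K) := LinearEquiv.ofLinearMap (f.prod (κ.toLinearMap ∘ₗ P))
    (s.coprod ((ker f).subtype ∘ₗ κ.symm.toLinearMap))
    (LinearMap.ext fun ⟨w, k⟩ => by
      have hk : f (κ.symm k) = 0 := (κ.symm k).2
      have hPk : P (s w + κ.symm k) = κ.symm k := Subtype.ext (by simp [hP, hs, hk])
      simp [hs, hk, hPk])
    (LinearMap.ext fun x => by simp [hP])
  refine ⟨_, E, fun x => rfl, Prod.ext rfl ?_⟩
  have hPz : P z = 0 := Subtype.ext (by simp [hP, hsz])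
  simp [E, hPz]

end Splitting

section LieBracketForm

variable {K L : Type*} [Field K] [LieRing L] [LieAlgebra K L]
  {B : LinearMap.BilinForm K L} {z : L}

theorem exists_lie_eq_smul_of_finrank_derivedSeries_le_one [FiniteDimensional K L]
    (hder : finrank K (LieAlgebra.derivedSeries K L 1) ≤ 1) (hL : ¬IsLieAbelian L) :
    ∃ (z : L) (B : LinearMap.BilinForm K L), z ≠ 0 ∧ ∀ x y, ⁅x, y⁆ = B x y • z := by
  obtain ⟨x₀, y₀, hz⟩ : ∃ x y : L, ⁅x, y⁆ ≠ 0 := by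
    by_contra! h
    exact hL ⟨fun x y => h x y⟩
  have hmem (x y : L) : ⁅x, y⁆ ∈ (LieAlgebra.derivedSeries K L 1 : Submodule K L) := by
    rw [LieAlgebra.coe_derivedSeries_one_eq]
    exact Submodule.subset_span ⟨x, y, rfl⟩
  have hspan : Submodule.span K {⁅x₀, y₀⁆} = LieAlgebra.derivedSeries K L 1 :=
    Submodule.eq_of_le_of_finrank_le (by simpa using hmem x₀ y₀)
      (by rwa [finrank_span_singleton hz])
  obtain ⟨ξ, hξ⟩ := Module.Projective.exists_dual_eq_one K hz
  refine ⟨_, (LieAlgebra.ad K L : L →ₗ[K] Module.End K L).compr₂ ξ, hz, fun x y => ?_⟩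
  obtain ⟨c, hc⟩ := Submodule.mem_span_singleton.mp (hspan ▸ hmem x y)
  simp [← hc, hξ]

theorem isAlt_of_lie_eq_smul (hz : z ≠ 0) (hlie : ∀ x y, ⁅x, y⁆ = B x y • z) : B.IsAlt :=
  fun x => (smul_eq_zero.mp ((hlie x x).symm.trans (lie_self x))).resolve_right hz

-- The Jacobi identity, read off in the coefficient of `z`.
theorem jacobi_of_lie_eq_smul (hz : z ≠ 0) (hlie : ∀ x y, ⁅x, y⁆ = B x y • z) (x y w : L) :
    B y w * B x z = B x y * B z w + B x w * B y z := by
  have h := leibniz_lie x y w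
  rw [hlie y w, lie_smul, hlie x z, hlie x y, smul_lie, hlie z w, hlie x w, lie_smul, hlie y z,
    smul_smul, smul_smul, smul_smul, ← add_smul] at h
  exact smul_left_injective K hz h

end LieBracketForm

theorem nonempty_lieEquiv_of_lie_eq_smul {K L L' : Type*} [CommRing K] [LieRing L] [LieAlgebra K L]
    [LieRing L'] [LieAlgebra K L'] (E : L ≃ₗ[K] L') {z : L} {β : L → L → K}
    (hL : ∀ x y, ⁅x, y⁆ = β x y • z) (hE : ∀ x y, ⁅E x, E y⁆ = β x y • E z) :
    Nonempty (L ≃ₗ⁅K⁆ L') :=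
  ⟨{ E with map_lie' := fun {x y} => by simp [hL, hE] }⟩

theorem b2a_lie_eq_smul {m : ℕ} (a b : ℂ × ℂ × (Fin m → ℂ)) :
    ⁅a, b⁆ = (a.1 * b.2.1 - b.1 * a.2.1) • ((0, 1, 0) : ℂ × ℂ × (Fin m → ℂ)) := by
  change ((0, _, 0) : ℂ × ℂ × (Fin m → ℂ)) = _
  simp

theorem heisA_lie_eq_smul {n m : ℕ} (a b : (Fin n → ℂ) × (Fin n → ℂ) × ℂ × (Fin m → ℂ)) :
    ⁅a, b⁆ = stdSymplectic (a.1, a.2.1) (b.1, b.2.1) •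
      ((0, 0, 1, 0) : (Fin n → ℂ) × (Fin n → ℂ) × ℂ × (Fin m → ℂ)) := by
  change ((0, 0, _, 0) : (Fin n → ℂ) × (Fin n → ℂ) × ℂ × (Fin m → ℂ)) = _
  simp [stdSymplectic]

section Classification

variable {L : Type*} [LieRing L] [LieAlgebra ℂ L] [FiniteDimensional ℂ L]
  {B : LinearMap.BilinForm ℂ L} {z : L}

theorem exists_lieEquiv_b2a_of_lie_eq_smul (hlie : ∀ x y, ⁅x, y⁆ = B x y • z) {e₀ : L}
    (he₀ : B e₀ z ≠ 0) : ∃ m : ℕ, Nonempty (L ≃ₗ⁅ℂ⁆ (ℂ × ℂ × (Fin m → ℂ))) := by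
  have hz : z ≠ 0 := by rintro rfl; simp at he₀
  have hB := isAlt_of_lie_eq_smul hz hlie
  set e := (B e₀ z)⁻¹ • e₀
  have hez : B e z = 1 := by simp [e, he₀]
  have hform (x y : L) : B x y = B x z * B e y - B y z * B e x := by
    have h := jacobi_of_lie_eq_smul hz hlie e x y
    rw [hez, mul_one, ← hB.neg_eq y z] at h
    rw [h]
    ring
  let f : L →ₗ[ℂ] ℂ × ℂ := (B.flip z).prod (B e)
  have hf : Function.Surjective f := fun ⟨a, b⟩ =>
    ⟨a • e + b • z, by simp [f, hez, hB.self_eq_zero e, hB.self_eq_zero z]⟩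
  have hfz : f z = (0, 1) := by simp [f, hez, hB.self_eq_zero z]
  obtain ⟨m, E, hE, hEz⟩ := LinearMap.exists_linearEquiv_prod_fin hf (z := z) (by simp [hfz])
  refine ⟨m, nonempty_lieEquiv_of_lie_eq_smul (E ≪≫ₗ LinearEquiv.prodAssoc ℂ _ _ _) hlie
    fun x y => ?_⟩
  simp [b2a_lie_eq_smul, hE, hEz, hfz, f, hform x y]

theorem exists_lieEquiv_heisA_of_lie_eq_smul (hz : z ≠ 0) (hlie : ∀ x y, ⁅x, y⁆ = B x y • z)
    (hcentral : ∀ x, B x z = 0) (hL : ¬IsLieAbelian L) :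
    ∃ n m : ℕ, 1 ≤ n ∧ Nonempty (L ≃ₗ⁅ℂ⁆ ((Fin n → ℂ) × (Fin n → ℂ) × ℂ × (Fin m → ℂ))) := by
  have hB := isAlt_of_lie_eq_smul hz hlie
  obtain ⟨n, f, hf, hBf⟩ := hB.exists_surjective_stdSymplectic
  have hfz : f z = 0 := eq_zero_of_forall_stdSymplectic_eq_zero fun b => by
    obtain ⟨y, rfl⟩ := hf b
    rw [← hBf, ← hB.neg_eq y z, hcentral, neg_zero]
  obtain ⟨ξ, hξ⟩ := Module.Projective.exists_dual_eq_one ℂ hz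
  have hF : Function.Surjective (f.prod ξ) := fun ⟨a, c⟩ => by
    obtain ⟨y, rfl⟩ := hf a
    exact ⟨y + (c - ξ y) • z, by simp [hfz, hξ]⟩
  obtain ⟨m, E, hE, hEz⟩ := LinearMap.exists_linearEquiv_prod_fin hF (z := z) (by simp [hξ])
  have hn : 1 ≤ n := by
    refine Nat.one_le_iff_ne_zero.mpr fun hn => hL ⟨fun x y => ?_⟩
    subst hn
    simp [hlie, hBf, stdSymplectic]
  refine ⟨n, m, hn, nonempty_lieEquiv_of_lie_eq_smul
    (E ≪≫ₗ LinearEquiv.prodAssoc ℂ _ _ _ ≪≫ₗ LinearEquiv.prodAssoc ℂ _ _ _) hlie fun x y => ?_⟩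
  simp [heisA_lie_eq_smul, hE, hEz, hfz, hξ, hBf x y]

end Classification

/-- A finite-dimensional complex Lie algebra whose derived algebra has dimension at
most one is abelian, or isomorphic to `b₂ ⊕ (abelian)`, or to `h_{2n+1} ⊕ (abelian)`. -/
theorem stmt6 (h : Type*) [LieRing h] [LieAlgebra ℂ h] [Module.Finite ℂ h]
    (hder : Module.finrank ℂ ↥(LieAlgebra.derivedSeries ℂ h 1) ≤ 1) :
    IsLieAbelian h ∨
      (∃ m : ℕ, Nonempty (h ≃ₗ⁅ℂ⁆ (ℂ × ℂ × (Fin m → ℂ)))) ∨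
      (∃ n m : ℕ, 1 ≤ n ∧
        Nonempty (h ≃ₗ⁅ℂ⁆ ((Fin n → ℂ) × (Fin n → ℂ) × ℂ × (Fin m → ℂ)))) := by
  by_cases hab : IsLieAbelian h
  · exact Or.inl hab
  obtain ⟨z, B, hz, hlie⟩ := exists_lie_eq_smul_of_finrank_derivedSeries_le_one hder hab
  by_cases hcentral : ∀ x, B x z = 0
  · exact Or.inr (Or.inr (exists_lieEquiv_heisA_of_lie_eq_smul hz hlie hcentral hab))
  · push Not at hcentral
    obtain ⟨e, he⟩ := hcentral
    exact Or.inr (Or.inl (exists_lieEquiv_b2a_of_lie_eq_smul hlie he))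
end

section
/- Let g be a finite-dimensional complex Lie algebra with index ind g. If x ∈ g* is such that dim g_x = ind g + 2, the derived algebra of g_x has dimension at most 1, and ind g_x ≥ ind g, then g_x is isomorphic to one of: (1) b₂ ⊕ ℂ^{ind g}, (2) h₃ ⊕ ℂ^{ind g − 1}, (3) Abelian of dimension ind g + 2. -/
/-- The coadjoint stabilizer `g_x = {ξ ∈ g ∣ ad*_ξ x = 0}` of `x ∈ g*`. -/
def coadjStab (g : Type*) [LieRing g] [LieAlgebra ℂ g] (x : Module.Dual ℂ g) :
    LieSubalgebra ℂ g where
  carrier := {ξ | ∀ w : g, x ⁅ξ, w⁆ = 0}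
  add_mem' := by intro a b ha hb w; simp [add_lie, ha w, hb w]
  zero_mem' := by intro w; simp
  smul_mem' := by intro t a ha w; simp [smul_lie, ha w]
  lie_mem' := by
    intro a b ha hb w
    have ha' : ∀ w : g, x ⁅a, w⁆ = 0 := ha
    have hb' : ∀ w : g, x ⁅b, w⁆ = 0 := hb
    simp [lie_lie, ha', hb']

/-- The index of `g`: the minimal dimension of a coadjoint stabilizer. -/
noncomputable def lieIndex (g : Type*) [LieRing g] [LieAlgebra ℂ g] : ℕ :=
  sInf (Set.range fun x : Module.Dual ℂ g => Module.finrank ℂ ↥(coadjStab g x))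


section Aux

open Module LieAlgebra

variable {L : Type*} [LieRing L] [LieAlgebra ℂ L]

/-- `u ↦ θ ⁅u, z⁆` as a linear map. -/
noncomputable def rbrkt (θ : Module.Dual ℂ L) (z : L) : L →ₗ[ℂ] ℂ where
  toFun u := θ ⁅u, z⁆
  map_add' u v := by simp [add_lie]
  map_smul' c u := by simp [smul_lie]

@[simp] lemma rbrkt_apply (θ : Module.Dual ℂ L) (z u : L) : rbrkt θ z u = θ ⁅u, z⁆ := rfl

lemma exists_dual_one {V : Type*} [AddCommGroup V] [Module ℂ V] {z : V} (hz : z ≠ 0) :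
    ∃ θ : Module.Dual ℂ V, θ z = 1 := by
  have := (Module.forall_dual_apply_eq_zero_iff ℂ z).not.mpr hz
  push_neg at this
  obtain ⟨φ, hφ⟩ := this
  exact ⟨(φ z)⁻¹ • φ, by simp [inv_mul_cancel₀ hφ]⟩

/-- From a one-dimensional derived algebra, obtain a spanning vector. -/
lemma exists_span_derived [FiniteDimensional ℂ L]
    (h : finrank ℂ ↥(LieAlgebra.derivedSeries ℂ L 1) = 1) :
    ∃ z : L, z ≠ 0 ∧ ∀ u v : L, ∃ c : ℂ, ⁅u, v⁆ = c • z := by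
  rw [finrank_eq_one_iff'] at h
  obtain ⟨z', hz0, hspan⟩ := h
  refine ⟨(z' : L), fun hc => hz0 (Subtype.ext hc), fun u v => ?_⟩
  have hmem : ⁅u, v⁆ ∈ LieAlgebra.derivedSeries ℂ L 1 := by
    rw [LieAlgebra.derivedSeries_def]
    exact LieSubmodule.lie_mem_lie (LieSubmodule.mem_top _) (LieSubmodule.mem_top _)
  obtain ⟨c, hc⟩ := hspan ⟨⁅u, v⁆, hmem⟩
  refine ⟨c, ?_⟩
  have := congrArg (Subtype.val) hc
  simpa using this.symm

/-- Upgrade a bracket-compatible linear equivalence to a Lie algebra equivalence. -/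
noncomputable def LinearEquiv.toLieEquivAux {L' : Type*} [LieRing L'] [LieAlgebra ℂ L']
    (e : L ≃ₗ[ℂ] L') (h : ∀ u v : L, e ⁅u, v⁆ = ⁅e u, e v⁆) : L ≃ₗ⁅ℂ⁆ L' :=
  { e.toLinearMap, e with map_lie' := by intro u v; exact h u v }

lemma lieIndex_le [FiniteDimensional ℂ L] (θ : Module.Dual ℂ L) :
    lieIndex L ≤ finrank ℂ ↥(coadjStab L θ) :=
  Nat.sInf_le ⟨θ, rfl⟩

theorem classify_aux (L : Type*) [LieRing L] [LieAlgebra ℂ L] [FiniteDimensional ℂ L] (n : ℕ)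
    (hdim : Module.finrank ℂ L = n + 2)
    (hder : Module.finrank ℂ ↥(LieAlgebra.derivedSeries ℂ L 1) ≤ 1)
    (hVin : n ≤ lieIndex L) :
    Nonempty (L ≃ₗ⁅ℂ⁆ (ℂ × ℂ × (Fin n → ℂ))) ∨
    Nonempty (L ≃ₗ⁅ℂ⁆ ((Fin 1 → ℂ) × (Fin 1 → ℂ) × ℂ × (Fin (n - 1) → ℂ))) ∨
    IsLieAbelian L := by
  have hb2brkt : ∀ x y : ℂ × ℂ × (Fin n → ℂ),
      ⁅x, y⁆ = (0, x.1 * y.2.1 - y.1 * x.2.1, 0) := fun _ _ => rfl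
  have hheisbrkt : ∀ x y : (Fin 1 → ℂ) × (Fin 1 → ℂ) × ℂ × (Fin (n - 1) → ℂ),
      ⁅x, y⁆ = (0, 0, x.1 0 * y.2.1 0 - y.1 0 * x.2.1 0, 0) := by
    intro x y
    show (_, _, ∑ i : Fin 1, _, _) = _
    rw [Fin.sum_univ_one]
  rcases Nat.lt_or_ge (finrank ℂ ↥(LieAlgebra.derivedSeries ℂ L 1)) 1 with h0 | h1
  · -- derived algebra is trivial: abelian
    right; right
    have h00 : finrank ℂ ↥(LieAlgebra.derivedSeries ℂ L 1) = 0 := by omega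
    have hsub : Subsingleton ↥(LieAlgebra.derivedSeries ℂ L 1) := finrank_zero_iff.mp h00
    constructor
    intro u v
    have hmem : ⁅u, v⁆ ∈ LieAlgebra.derivedSeries ℂ L 1 := by
      rw [LieAlgebra.derivedSeries_def]
      exact LieSubmodule.lie_mem_lie (LieSubmodule.mem_top _) (LieSubmodule.mem_top _)
    have := hsub.elim ⟨⁅u, v⁆, hmem⟩ ⟨0, Submodule.zero_mem _⟩
    simpa using congrArg Subtype.val this
  · -- one-dimensional derived algebra
    obtain ⟨z, hz, hspan⟩ := exists_span_derived (le_antisymm hder h1)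
    obtain ⟨θ, hθ⟩ := exists_dual_one hz
    have key : ∀ u v : L, ⁅u, v⁆ = θ ⁅u, v⁆ • z := by
      intro u v
      obtain ⟨c, hc⟩ := hspan u v
      rw [hc, map_smul, smul_eq_mul, hθ, mul_one]
    have jac : ∀ u v w : L,
        θ ⁅v, w⁆ * θ ⁅u, z⁆ + θ ⁅w, u⁆ * θ ⁅v, z⁆ + θ ⁅u, v⁆ * θ ⁅w, z⁆ = 0 := by
      intro u v w
      have h0 := lie_jacobi u v w
      rw [key v w, key w u, key u v, lie_smul, lie_smul, lie_smul,
        key u z, key v z, key w z, smul_smul, smul_smul, smul_smul,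
        ← add_smul, ← add_smul] at h0
      exact (smul_eq_zero.mp h0).resolve_right hz
    by_cases hA : ∃ a : L, θ ⁅a, z⁆ ≠ 0
    · -- case b₂ ⊕ abelian
      left
      obtain ⟨a₀, ha₀⟩ := hA
      set a : L := (θ ⁅a₀, z⁆)⁻¹ • a₀ with ha_def
      have haz : θ ⁅a, z⁆ = 1 := by
        rw [ha_def, smul_lie, map_smul, smul_eq_mul, inv_mul_cancel₀ ha₀]
      clear_value a
      set α : L →ₗ[ℂ] ℂ := rbrkt θ z with hα
      set γ : L →ₗ[ℂ] ℂ := -(rbrkt θ a) with hγ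
      have hγ_apply : ∀ u : L, γ u = θ ⁅a, u⁆ := by
        intro u
        have : γ u = -(θ ⁅u, a⁆) := rfl
        rw [this, ← map_neg, lie_skew]
      have hαa : α a = 1 := haz
      have hαz : α z = 0 := by simp [hα]
      have hγz : γ z = 1 := by rw [hγ_apply, haz]
      have hγa : γ a = 0 := by rw [hγ_apply]; simp
      have key2 : ∀ u v : L, θ ⁅u, v⁆ = α u * γ v - α v * γ u := by
        intro u v
        have h0 := jac u v a
        rw [haz, mul_one] at h0
        have h1 : θ ⁅v, a⁆ = -γ v := by rw [hγ_apply, ← lie_skew a v, map_neg, neg_neg]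
        have h2 : θ ⁅a, u⁆ = γ u := (hγ_apply u).symm
        rw [h1, h2] at h0
        have h3 : α u = θ ⁅u, z⁆ := rfl
        have h4 : α v = θ ⁅v, z⁆ := rfl
        rw [← h3, ← h4] at h0
        linear_combination h0
      set W : Submodule ℂ L := Submodule.span ℂ (Set.range ![a, z]) with hW
      have haW : a ∈ W := Submodule.subset_span ⟨0, rfl⟩
      have hzW : z ∈ W := Submodule.subset_span ⟨1, rfl⟩
      have hli : LinearIndependent ℂ ![a, z] := by
        rw [LinearIndependent.pair_iff]
        intro s t hst
        have e1 := congrArg α hst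
        rw [map_add, map_smul, map_smul, hαa, hαz, map_zero] at e1
        have hs : s = 0 := by simpa using e1
        have e2 := congrArg γ hst
        rw [map_add, map_smul, map_smul, hγa, hγz, map_zero] at e2
        have ht : t = 0 := by simpa [hs] using e2
        exact ⟨hs, ht⟩
      have hW2 : finrank ℂ W = 2 := by
        rw [hW, finrank_span_eq_card hli]
        simp
      have hQ : finrank ℂ (L ⧸ W) = n := by
        have := Submodule.finrank_quotient_add_finrank W
        omega
      let ψ : (L ⧸ W) ≃ₗ[ℂ] (Fin n → ℂ) :=
        LinearEquiv.ofFinrankEq _ _ (by rw [hQ]; simp)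
      let Φ : L →ₗ[ℂ] ℂ × ℂ × (Fin n → ℂ) :=
        α.prod (γ.prod (ψ.toLinearMap ∘ₗ W.mkQ))
      have hΦ_apply : ∀ u : L, Φ u = (α u, γ u, ψ (W.mkQ u)) := fun u => rfl
      have hinj : Function.Injective Φ := by
        rw [← LinearMap.ker_eq_bot, Submodule.eq_bot_iff]
        intro u hu
        have hu0 : Φ u = 0 := hu
        have e1 : α u = 0 := congrArg Prod.fst hu0
        have e2 : γ u = 0 := congrArg (fun p => p.2.1) hu0
        have e3 : ψ (W.mkQ u) = 0 := congrArg (fun p => p.2.2) hu0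
        have huW : u ∈ W := by
          rw [← Submodule.Quotient.mk_eq_zero]
          exact ψ.map_eq_zero_iff.mp e3
        rw [hW, Submodule.mem_span_range_iff_exists_fun] at huW
        obtain ⟨c, hc⟩ := huW
        rw [Fin.sum_univ_two] at hc
        simp only [Matrix.cons_val_zero, Matrix.cons_val_one, Matrix.head_cons] at hc
        have ec1 := congrArg α hc
        rw [map_add, map_smul, map_smul, hαa, hαz, e1] at ec1
        have hc0 : c 0 = 0 := by simpa using ec1
        have ec2 := congrArg γ hc
        rw [map_add, map_smul, map_smul, hγa, hγz, e2] at ec2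
        have hc1 : c 1 = 0 := by simpa using ec2
        rw [← hc, hc0, hc1, zero_smul, zero_smul, add_zero]
      have hfr : finrank ℂ L = finrank ℂ (ℂ × ℂ × (Fin n → ℂ)) := by
        rw [hdim]
        simp [Module.finrank_prod]
        ring
      let e := LinearMap.linearEquivOfInjective Φ hinj hfr
      have he_apply : ∀ u : L, e u = Φ u := fun u => rfl
      refine ⟨e.toLieEquivAux ?_⟩
      intro u v
      rw [he_apply, he_apply, he_apply, hb2brkt, hΦ_apply, hΦ_apply, hΦ_apply]
      have hbr : ⁅u, v⁆ = θ ⁅u, v⁆ • z := key u v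
      rw [hbr]
      refine Prod.ext ?_ (Prod.ext ?_ ?_)
      · simp [hαz]
      · show γ (θ ⁅u, v⁆ • z) = α u * γ v - α v * γ u
        rw [map_smul, hγz, smul_eq_mul, mul_one, key2]
      · show ψ (W.mkQ (θ ⁅u, v⁆ • z)) = 0
        have : W.mkQ z = 0 := (Submodule.Quotient.mk_eq_zero W).mpr hzW
        rw [map_smul, map_smul, this, map_zero, smul_zero]
    · -- z is "central" for θ-pairing against z
      push_neg at hA
      by_cases hB : ∃ p q : L, θ ⁅p, q⁆ ≠ 0
      · -- Heisenberg case
        right; left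
        obtain ⟨p₀, q, hpq₀⟩ := hB
        have hskew : ∀ u v : L, θ ⁅u, v⁆ = -θ ⁅v, u⁆ := by
          intro u v
          rw [← lie_skew v u, map_neg, neg_neg]
        set p : L := (θ ⁅p₀, q⁆)⁻¹ • p₀ with hp_def
        have hpq : θ ⁅p, q⁆ = 1 := by
          rw [hp_def, smul_lie, map_smul, smul_eq_mul, inv_mul_cancel₀ hpq₀]
        clear_value p
        have hqp : θ ⁅q, p⁆ = -1 := by rw [hskew, hpq]
        set A : L →ₗ[ℂ] ℂ := rbrkt θ q with hAdef
        set B : L →ₗ[ℂ] ℂ := -(rbrkt θ p) with hBdef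
        have hA_apply : ∀ u : L, A u = θ ⁅u, q⁆ := fun u => rfl
        have hB_apply : ∀ u : L, B u = -θ ⁅u, p⁆ := fun u => rfl
        have hAp : A p = 1 := hpq
        have hAq : A q = 0 := by rw [hA_apply, lie_self, map_zero]
        have hAz : A z = 0 := by rw [hA_apply, hskew, hA q, neg_zero]
        have hBp : B p = 0 := by rw [hB_apply, lie_self, map_zero, neg_zero]
        have hBq : B q = 1 := by rw [hB_apply, hqp]; norm_num
        have hBz : B z = 0 := by rw [hB_apply, hskew, hA p, neg_zero, neg_zero]
        -- the radical of the form
        set f : L →ₗ[ℂ] ℂ × ℂ := (rbrkt θ p).prod (rbrkt θ q) with hfdef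
        set W : Submodule ℂ L := LinearMap.ker f with hWdef
        have hmemW : ∀ u : L, u ∈ W ↔ θ ⁅u, p⁆ = 0 ∧ θ ⁅u, q⁆ = 0 := by
          intro u
          rw [hWdef, LinearMap.mem_ker, hfdef, LinearMap.prod_apply, Prod.ext_iff]
          exact Iff.rfl
        have hsurj : Function.Surjective f := by
          rintro ⟨s, t⟩
          refine ⟨t • p - s • q, ?_⟩
          rw [hfdef, LinearMap.prod_apply]
          have e1 : rbrkt θ p (t • p - s • q) = s := by
            rw [map_sub, map_smul, map_smul, rbrkt_apply, rbrkt_apply, lie_self, map_zero, hqp]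
            simp
          have e2 : rbrkt θ q (t • p - s • q) = t := by
            rw [map_sub, map_smul, map_smul, rbrkt_apply, rbrkt_apply, lie_self, map_zero, hpq]
            simp
          show ((rbrkt θ p) (t • p - s • q), (rbrkt θ q) (t • p - s • q)) = (s, t)
          rw [e1, e2]
        have hWrank : finrank ℂ ↥W = n := by
          have h1 := LinearMap.finrank_range_add_finrank_ker f
          have h2 : LinearMap.range f = ⊤ := LinearMap.range_eq_top.mpr hsurj
          rw [h2] at h1
          have h3 : finrank ℂ ↥(⊤ : Submodule ℂ (ℂ × ℂ)) = 2 := by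
            rw [finrank_top]
            simp [Module.finrank_prod]
          rw [h3, hdim] at h1
          rw [hWdef]
          omega
        -- the coadjoint stabilizer of θ is contained in W and has dimension ≥ n
        have hRW : (coadjStab L θ).toSubmodule ≤ W := by
          intro u hu
          rw [hmemW]
          exact ⟨hu p, hu q⟩
        have hRrank : n ≤ finrank ℂ ↥(coadjStab L θ).toSubmodule :=
          le_trans hVin (le_trans (lieIndex_le θ) (le_of_eq rfl))
        have hReqW : (coadjStab L θ).toSubmodule = W :=
          Submodule.eq_of_le_of_finrank_le hRW (by omega)
        have hWrad : ∀ w ∈ W, ∀ x : L, θ ⁅w, x⁆ = 0 := by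
          intro w hw x
          rw [← hReqW] at hw
          exact hw x
        have hWrad' : ∀ w ∈ W, ∀ x : L, θ ⁅x, w⁆ = 0 := by
          intro w hw x
          rw [hskew, hWrad w hw x, neg_zero]
        -- the key bilinear identity
        have hresid : ∀ u : L, u - A u • p - B u • q ∈ W := by
          intro u
          rw [hmemW]
          constructor
          · have hexp : θ ⁅u - A u • p - B u • q, p⁆ =
                θ ⁅u, p⁆ - A u * θ ⁅p, p⁆ - B u * θ ⁅q, p⁆ := by
              rw [sub_lie, sub_lie, smul_lie, smul_lie, map_sub, map_sub, map_smul, map_smul]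
              rfl
            rw [hexp, lie_self, map_zero, hqp, hB_apply]
            ring
          · have hexp : θ ⁅u - A u • p - B u • q, q⁆ =
                θ ⁅u, q⁆ - A u * θ ⁅p, q⁆ - B u * θ ⁅q, q⁆ := by
              rw [sub_lie, sub_lie, smul_lie, smul_lie, map_sub, map_sub, map_smul, map_smul]
              rfl
            rw [hexp, lie_self, map_zero, hpq, hA_apply]
            ring
        have key2 : ∀ u v : L, θ ⁅u, v⁆ = A u * B v - A v * B u := by
          intro u v
          have hwu : u - A u • p - B u • q ∈ W := hresid u
          have hwv : v - A v • p - B v • q ∈ W := hresid v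
          have hu' : u = A u • p + B u • q + (u - A u • p - B u • q) := by abel
          have hv' : v = A v • p + B v • q + (v - A v • p - B v • q) := by abel
          conv_lhs => rw [hu', hv']
          simp only [add_lie, lie_add, smul_lie, lie_smul, map_add, map_smul, smul_eq_mul,
            hWrad _ hwu, hWrad' _ hwv, lie_self, map_zero, mul_zero, add_zero, zero_add,
            hpq, hqp]
          ring
        -- z lies in W
        have hzW : z ∈ W := by
          rw [hmemW]
          exact ⟨by rw [hskew, hA p, neg_zero], by rw [hskew, hA q, neg_zero]⟩
        -- span of p, q, z
        set V3 : Submodule ℂ L := Submodule.span ℂ (Set.range ![p, q, z]) with hV3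
        have hpV3 : p ∈ V3 := Submodule.subset_span ⟨0, rfl⟩
        have hqV3 : q ∈ V3 := Submodule.subset_span ⟨1, rfl⟩
        have hzV3 : z ∈ V3 := Submodule.subset_span ⟨2, rfl⟩
        have hli3 : LinearIndependent ℂ ![p, q, z] := by
          rw [Fintype.linearIndependent_iff]
          intro g hg
          rw [Fin.sum_univ_three] at hg
          simp only [Matrix.cons_val_zero, Matrix.cons_val_one, Matrix.head_cons,
            Matrix.cons_val_two, Matrix.tail_cons] at hg
          have eA := congrArg A hg
          rw [map_add, map_add, map_smul, map_smul, map_smul, hAp, hAq, hAz, map_zero] at eA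
          have hg0 : g 0 = 0 := by simpa using eA
          have eB := congrArg B hg
          rw [map_add, map_add, map_smul, map_smul, map_smul, hBp, hBq, hBz, map_zero] at eB
          have hg1 : g 1 = 0 := by simpa using eB
          have eθ := congrArg θ hg
          rw [map_add, map_add, map_smul, map_smul, map_smul, hθ, map_zero, hg0, hg1] at eθ
          have hg2 : g 2 = 0 := by simpa using eθ
          intro i
          fin_cases i
          · exact hg0
          · exact hg1
          · exact hg2
        have hV3rank : finrank ℂ ↥V3 = 3 := by
          rw [hV3, finrank_span_eq_card hli3]
          simp
        have hn1 : 1 ≤ n := by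
          have := Submodule.finrank_le V3
          omega
        have hQ3 : finrank ℂ (L ⧸ V3) = n - 1 := by
          have := Submodule.finrank_quotient_add_finrank V3
          omega
        let ψ : (L ⧸ V3) ≃ₗ[ℂ] (Fin (n - 1) → ℂ) :=
          LinearEquiv.ofFinrankEq _ _ (by rw [hQ3]; simp)
        let Φ : L →ₗ[ℂ] (Fin 1 → ℂ) × (Fin 1 → ℂ) × ℂ × (Fin (n - 1) → ℂ) :=
          (LinearMap.pi fun _ : Fin 1 => A).prod
            ((LinearMap.pi fun _ : Fin 1 => B).prod (θ.prod (ψ.toLinearMap ∘ₗ V3.mkQ)))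
        have hΦ_apply : ∀ u : L,
            Φ u = (fun _ => A u, fun _ => B u, θ u, ψ (V3.mkQ u)) := fun u => rfl
        have hinj : Function.Injective Φ := by
          rw [← LinearMap.ker_eq_bot, Submodule.eq_bot_iff]
          intro u hu
          have hu0 : Φ u = 0 := hu
          have e1 : A u = 0 := congrFun (congrArg Prod.fst hu0) 0
          have e2 : B u = 0 := congrFun (congrArg (fun r => r.2.1) hu0) 0
          have e3 : θ u = 0 := congrArg (fun r => r.2.2.1) hu0
          have e4 : ψ (V3.mkQ u) = 0 := congrArg (fun r => r.2.2.2) hu0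
          have huV : u ∈ V3 := by
            rw [← Submodule.Quotient.mk_eq_zero]
            exact ψ.map_eq_zero_iff.mp e4
          rw [hV3, Submodule.mem_span_range_iff_exists_fun] at huV
          obtain ⟨c, hc⟩ := huV
          rw [Fin.sum_univ_three] at hc
          simp only [Matrix.cons_val_zero, Matrix.cons_val_one, Matrix.head_cons,
            Matrix.cons_val_two, Matrix.tail_cons] at hc
          have eA := congrArg A hc
          rw [map_add, map_add, map_smul, map_smul, map_smul, hAp, hAq, hAz, e1] at eA
          have hc0 : c 0 = 0 := by simpa using eA
          have eB := congrArg B hc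
          rw [map_add, map_add, map_smul, map_smul, map_smul, hBp, hBq, hBz, e2] at eB
          have hc1 : c 1 = 0 := by simpa using eB
          have eθ := congrArg θ hc
          rw [map_add, map_add, map_smul, map_smul, map_smul, hθ, e3, hc0, hc1] at eθ
          have hc2 : c 2 = 0 := by simpa using eθ
          rw [← hc, hc0, hc1, hc2, zero_smul, zero_smul, zero_smul, add_zero, add_zero]
        have hfr : finrank ℂ L =
            finrank ℂ ((Fin 1 → ℂ) × (Fin 1 → ℂ) × ℂ × (Fin (n - 1) → ℂ)) := by
          rw [hdim]
          simp [Module.finrank_prod]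
          omega
        let e := LinearMap.linearEquivOfInjective Φ hinj hfr
        have he_apply : ∀ u : L, e u = Φ u := fun u => rfl
        refine ⟨e.toLieEquivAux ?_⟩
        intro u v
        rw [he_apply, he_apply, he_apply, hheisbrkt, hΦ_apply, hΦ_apply, hΦ_apply]
        have hbr : ⁅u, v⁆ = θ ⁅u, v⁆ • z := key u v
        rw [hbr]
        refine Prod.ext ?_ (Prod.ext ?_ (Prod.ext ?_ ?_))
        · show (fun _ : Fin 1 => A (θ ⁅u, v⁆ • z)) = 0
          funext i
          rw [map_smul, hAz, smul_zero]
          rfl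
        · show (fun _ : Fin 1 => B (θ ⁅u, v⁆ • z)) = 0
          funext i
          rw [map_smul, hBz, smul_zero]
          rfl
        · show θ (θ ⁅u, v⁆ • z) = _
          rw [map_smul, hθ, smul_eq_mul, mul_one]
          exact key2 u v
        · show ψ (V3.mkQ (θ ⁅u, v⁆ • z)) = 0
          have : V3.mkQ z = 0 := (Submodule.Quotient.mk_eq_zero V3).mpr hzV3
          rw [map_smul, map_smul, this, map_zero, smul_zero]
      · -- abelian
        right; right
        push_neg at hB
        constructor
        intro u v
        rw [key u v, hB u v, zero_smul]


end Aux

/-- If `x ∈ g*` is subregular (`dim g_x = ind g + 2`), the derived algebra of `g_x` is at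
most one-dimensional and the Vinberg inequality `ind g_x ≥ ind g` holds, then `g_x` is
isomorphic to `b₂ ⊕ ℂ^{ind g}`, to `h₃ ⊕ ℂ^{ind g - 1}`, or is abelian (of dimension
`ind g + 2`). -/
theorem stmt7 (g : Type*) [LieRing g] [LieAlgebra ℂ g] [Module.Finite ℂ g]
    (x : Module.Dual ℂ g)
    (hdim : Module.finrank ℂ ↥(coadjStab g x) = lieIndex g + 2)
    (hder : Module.finrank ℂ ↥(LieAlgebra.derivedSeries ℂ ↥(coadjStab g x) 1) ≤ 1)
    (hVin : lieIndex g ≤ lieIndex ↥(coadjStab g x)) :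
    Nonempty (↥(coadjStab g x) ≃ₗ⁅ℂ⁆ (ℂ × ℂ × (Fin (lieIndex g) → ℂ))) ∨
    Nonempty (↥(coadjStab g x) ≃ₗ⁅ℂ⁆
      ((Fin 1 → ℂ) × (Fin 1 → ℂ) × ℂ × (Fin (lieIndex g - 1) → ℂ))) ∨
    IsLieAbelian ↥(coadjStab g x) := by
  exact classify_aux ↥(coadjStab g x) (lieIndex g) hdim hder hVin
end

section
/- Let P₀, P∞ be two skew-symmetric bilinear forms on a finite-dimensional complex vector space V, P_λ = P₀ − λP∞ for λ ∈ ℂ ∪ {∞} (with P_∞ := P∞), r = min over λ of corank P_λ, Λ = {λ : corank P_λ > r}, and L = Σ_{λ ∉ Λ} Ker P_λ. Then L is isotropic with respect to every form P_λ. -/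
open Module LinearMap
open Polynomial

variable {V : Type*} [AddCommGroup V] [Module ℂ V]

/-- The pencil `P_λ = P₀ - λ P_∞` of bilinear forms, `λ ∈ ℂ ∪ {∞}` (`∞` is `none`,
with `P_∞ := P∞`). -/
noncomputable def pencil (P0 Pinf : V →ₗ[ℂ] V →ₗ[ℂ] ℂ) : Option ℂ → (V →ₗ[ℂ] V →ₗ[ℂ] ℂ)
  | none => Pinf
  | some l => P0 - l • Pinf

/-- The generic (minimal) corank `r` of the pencil. -/
noncomputable def genericCorank (P0 Pinf : V →ₗ[ℂ] V →ₗ[ℂ] ℂ) : ℕ :=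
  sInf (Set.range fun l : Option ℂ => finrank ℂ ↥(LinearMap.ker (pencil P0 Pinf l)))

/-- The exceptional set `Λ` of pencil parameters where the corank exceeds `r`. -/
def exceptional (P0 Pinf : V →ₗ[ℂ] V →ₗ[ℂ] ℂ) : Set (Option ℂ) :=
  {l | genericCorank P0 Pinf < finrank ℂ ↥(LinearMap.ker (pencil P0 Pinf l))}

/-- `L = Σ_{λ ∉ Λ} Ker P_λ`. -/
noncomputable def Lspace (P0 Pinf : V →ₗ[ℂ] V →ₗ[ℂ] ℂ) : Submodule ℂ V :=
  ⨆ l ∈ {l : Option ℂ | l ∉ exceptional P0 Pinf}, LinearMap.ker (pencil P0 Pinf l)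

lemma skew_of_diag (P : V →ₗ[ℂ] V →ₗ[ℂ] ℂ) (h : ∀ v, P v v = 0) (u w : V) :
    P u w = - P w u := by
  have h2 := h (u + w)
  simp only [map_add, LinearMap.add_apply, h u, h w] at h2
  linear_combination h2

lemma indep_of_det [FiniteDimensional ℂ V] {k : ℕ} (g : Fin k → Module.Dual ℂ V)
    (x : Fin k → V) (hdet : (Matrix.of fun i j => g i (x j)).det ≠ 0) :
    LinearIndependent ℂ g := by
  set M : Matrix (Fin k) (Fin k) ℂ := Matrix.of fun i j => g i (x j) with hM
  rw [Fintype.linearIndependent_iff]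
  intro c hc
  have hv : Matrix.vecMul c M = 0 := by
    funext j
    have := congrArg (fun φ : Module.Dual ℂ V => φ (x j)) hc
    simpa [Matrix.vecMul, dotProduct, hM, mul_comm] using this
  have hinv : M * M⁻¹ = 1 := Matrix.mul_nonsing_inv M (isUnit_iff_ne_zero.mpr hdet)
  have : c = 0 := by
    calc c = Matrix.vecMul c (M * M⁻¹) := by rw [hinv, Matrix.vecMul_one]
    _ = Matrix.vecMul (Matrix.vecMul c M) M⁻¹ := by rw [Matrix.vecMul_vecMul]
    _ = 0 := by rw [hv, Matrix.zero_vecMul]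
  exact fun i => congrFun this i

lemma exists_dual_family [FiniteDimensional ℂ V] {k : ℕ} (f : Fin k → Module.Dual ℂ V)
    (hf : LinearIndependent ℂ f) :
    ∃ y : Fin k → V, ∀ i j, f i (y j) = if i = j then 1 else 0 := by
  set π : V →ₗ[ℂ] (Fin k → ℂ) := LinearMap.pi f with hπ
  have hsurj : Function.Surjective π := by
    rw [← LinearMap.range_eq_top]
    by_contra hne
    obtain ⟨g, hg0, hg⟩ := Submodule.exists_dual_map_eq_bot_of_lt_top
      (lt_top_iff_ne_top.mpr hne) inferInstance
    have hgπ : ∀ v, g (π v) = 0 := by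
      intro v
      have : g (π v) ∈ (LinearMap.range π).map g := ⟨π v, ⟨v, rfl⟩, rfl⟩
      rw [hg] at this
      simpa using this
    have hcomb : (∑ i, g (Pi.single i 1) • f i) = 0 := by
      ext v
      have hx : π v = ∑ i, (f i v) • (Pi.single i (1:ℂ) : Fin k → ℂ) := by
        funext j
        simp [hπ, LinearMap.pi_apply, Pi.single_apply]
      have := hgπ v
      rw [hx] at this
      simpa [map_sum, mul_comm] using this
    have hz := Fintype.linearIndependent_iff.mp hf _ hcomb
    apply hg0
    apply (Pi.basisFun ℂ (Fin k)).ext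
    intro i
    simpa using hz i
  choose y hy using fun j => hsurj (Pi.single j 1)
  refine ⟨y, fun i j => ?_⟩
  have := congrFun (hy j) i
  simp only [hπ, LinearMap.pi_apply] at this
  rw [this, Pi.single_apply, eq_comm]

lemma corank_drop [FiniteDimensional ℂ V] (A B : V →ₗ[ℂ] V →ₗ[ℂ] ℂ)
    (hA : ∀ v, A v v = 0) (u w : V) (hu : u ∈ LinearMap.ker A) (hw : w ∈ LinearMap.ker A)
    (hBuw : B u w ≠ 0) :
    ∃ t : ℂ, t ≠ 0 ∧
      finrank ℂ (LinearMap.ker (A + t • B)) < finrank ℂ (LinearMap.ker A) := by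
  classical
  set m := finrank ℂ (LinearMap.range A) with hm
  set b := finBasis ℂ ↥(LinearMap.range A) with hb
  have hmem : ∀ i : Fin m, (b i : Module.Dual ℂ V) ∈ LinearMap.range A := fun i => (b i).2
  choose uu huu using fun i => LinearMap.mem_range.mp (hmem i)
  have hfind : LinearIndependent ℂ (fun i => A (uu i)) := by
    have : (fun i => A (uu i)) = ((LinearMap.range A).subtype ∘ b) := by
      funext i; simp [huu i]
    rw [this]
    exact b.linearIndependent.map' _ (Submodule.ker_subtype _)
  obtain ⟨y, hy⟩ := exists_dual_family _ hfind
  set vv : Fin (m+1) → V := Fin.snoc uu u with hvv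
  set xx : Fin (m+1) → V := Fin.snoc y w with hxx
  have hAu : A u = 0 := hu
  have hAxw : ∀ v, A v w = 0 := fun v => by
    rw [skew_of_diag A hA v w]
    have : A w = 0 := hw
    simp [this]
  set N : Matrix (Fin (m+1)) (Fin (m+1)) (Polynomial ℂ) :=
    Matrix.of fun i j => if i = Fin.last m then Polynomial.C (B (vv i) (xx j))
      else Polynomial.C (A (vv i) (xx j)) + Polynomial.X * Polynomial.C (B (vv i) (xx j))
    with hN
  -- evaluation at 0 is lower triangular with nonzero diagonal
  have hdet0 : (N.map (evalRingHom 0)).det = B u w := by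
    have htri : (N.map (evalRingHom 0)).BlockTriangular OrderDual.toDual := by
      intro i j hij
      have hij' : i < j := hij
      have hine : i ≠ Fin.last m := (Fin.lt_last_iff_ne_last.mp (lt_of_lt_of_le hij' (Fin.le_last j)))
      obtain ⟨i', rfl⟩ : ∃ i' : Fin m, i = Fin.castSucc i' :=
        ⟨i.castPred hine, by simp⟩
      simp only [hN, Matrix.map_apply, Matrix.of_apply, if_neg hine, map_add, eval_add,
        coe_evalRingHom, eval_C, eval_mul, eval_X, zero_mul, add_zero]
      by_cases hj : j = Fin.last m
      · subst hj
        simp [hvv, hxx, Fin.snoc_castSucc, Fin.snoc_last, hAxw]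
      · obtain ⟨j', rfl⟩ : ∃ j' : Fin m, j = Fin.castSucc j' :=
          ⟨j.castPred hj, by simp⟩
        have hne : i' ≠ j' := by
          intro hcon; subst hcon; exact absurd rfl (ne_of_lt hij')
        simp [hvv, hxx, Fin.snoc_castSucc, hy, if_neg hne]
    rw [Matrix.det_of_lowerTriangular _ htri]
    have hdiag : ∀ i : Fin (m+1), (N.map (evalRingHom 0)) i i =
        if i = Fin.last m then B u w else 1 := by
      intro i
      by_cases hi : i = Fin.last m
      · subst hi
        simp [hN, hvv, hxx, Fin.snoc_last]
      · obtain ⟨i', rfl⟩ : ∃ i' : Fin m, i = Fin.castSucc i' :=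
          ⟨i.castPred hi, by simp⟩
        simp [hN, hi, hvv, hxx, Fin.snoc_castSucc, hy]
    rw [Finset.prod_congr rfl (fun i _ => hdiag i), Finset.prod_ite_eq']
    simp
  have key : ∀ s : ℂ, (N.map (evalRingHom s)).det = Polynomial.eval s N.det := by
    intro s
    rw [← RingHom.mapMatrix_apply, ← RingHom.map_det, coe_evalRingHom]
  have hNdet : N.det ≠ 0 := by
    intro hcon
    have h2 := hdet0
    rw [key 0, hcon] at h2
    simp at h2
    exact hBuw h2.symm
  obtain ⟨t, ht⟩ : ∃ t : ℂ, t ∉ insert (0:ℂ) {x | N.det.IsRoot x} :=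
    Set.Infinite.nonempty (Set.Finite.infinite_compl
      ((Polynomial.finite_setOf_isRoot hNdet).insert 0))
  have ht0 : t ≠ 0 := fun hcon => ht (by rw [hcon]; exact Set.mem_insert _ _)
  have htr : ¬ N.det.IsRoot t := fun hcon => ht (Set.mem_insert_of_mem _ hcon)
  set g : Fin (m+1) → Module.Dual ℂ V := fun i =>
    if i = Fin.last m then B (vv i) else A (vv i) + t • B (vv i) with hg
  have hgentry : ∀ i, g i = if i = Fin.last m then B (vv i)
      else A (vv i) + t • B (vv i) := fun i => rfl
  have hNentry : ∀ i j, N i j = if i = Fin.last m then Polynomial.C (B (vv i) (xx j))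
      else Polynomial.C (A (vv i) (xx j)) + Polynomial.X * Polynomial.C (B (vv i) (xx j)) :=
    fun i j => rfl
  have hMt : (Matrix.of fun i j => g i (xx j)) = N.map (evalRingHom t) := by
    ext i j
    rw [Matrix.map_apply, hNentry i j, Matrix.of_apply, hgentry i]
    by_cases hi : i = Fin.last m
    · rw [if_pos hi, if_pos hi]
      simp only [coe_evalRingHom, eval_C]
    · rw [if_neg hi, if_neg hi]
      simp only [coe_evalRingHom, LinearMap.add_apply, LinearMap.smul_apply, eval_add, eval_mul,
        eval_C, eval_X, smul_eq_mul]
  have hdetMt : (Matrix.of fun i j => g i (xx j)).det ≠ 0 := by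
    rw [hMt, key t]
    exact htr
  have hgind : LinearIndependent ℂ g := indep_of_det g xx hdetMt
  set cu : Fin (m+1) → ℂˣ := fun i => if i = Fin.last m then Units.mk0 t ht0 else 1 with hcu
  have hCfam : (fun i => (A + t • B) (vv i)) = (cu • g) := by
    funext i
    by_cases hi : i = Fin.last m
    · subst hi
      simp [hg, hcu, hvv, Fin.snoc_last, hAu, Pi.smul_apply']
    · simp [hg, hcu, hi, Pi.smul_apply']
  have hind2 : LinearIndependent ℂ (fun i => (A + t • B) (vv i)) := by
    rw [hCfam]; exact hgind.units_smul cu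
  have hspan : Submodule.span ℂ (Set.range fun i => (A + t • B) (vv i)) ≤
      LinearMap.range (A + t • B) := by
    rw [Submodule.span_le]
    rintro _ ⟨i, rfl⟩
    exact LinearMap.mem_range_self _ (vv i)
  have h1 : m + 1 ≤ finrank ℂ (LinearMap.range (A + t • B)) := by
    have hcard := finrank_span_eq_card hind2
    rw [Fintype.card_fin] at hcard
    calc m + 1 = _ := hcard.symm
    _ ≤ _ := Submodule.finrank_mono hspan
  have rnA := LinearMap.finrank_range_add_finrank_ker A
  have rnC := LinearMap.finrank_range_add_finrank_ker (A + t • B)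
  exact ⟨t, ht0, by omega⟩

lemma ker_isotropic_aux [FiniteDimensional ℂ V] (A B : V →ₗ[ℂ] V →ₗ[ℂ] ℂ)
    (hA : ∀ v, A v v = 0)
    (hmin : ∀ t : ℂ, t ≠ 0 →
      finrank ℂ (LinearMap.ker A) ≤ finrank ℂ (LinearMap.ker (A + t • B)))
    {u w : V} (hu : u ∈ LinearMap.ker A) (hw : w ∈ LinearMap.ker A) : B u w = 0 := by
  by_contra h
  obtain ⟨t, ht0, hlt⟩ := corank_drop A B hA u w hu hw h
  exact absurd (hmin t ht0) (not_le.mpr hlt)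

lemma generic_le (P0 Pinf : V →ₗ[ℂ] V →ₗ[ℂ] ℂ) (l : Option ℂ) :
    genericCorank P0 Pinf ≤ finrank ℂ (LinearMap.ker (pencil P0 Pinf l)) :=
  Nat.sInf_le ⟨l, rfl⟩

lemma mem_some (P0 Pinf : V →ₗ[ℂ] V →ₗ[ℂ] ℂ) {a : ℂ} {u : V} (hu : u ∈ LinearMap.ker (pencil P0 Pinf (some a))) :
    ∀ x, P0 u x = a * Pinf u x := by
  intro x
  have h : (P0 - a • Pinf) u = 0 := hu
  have := congrArg (fun φ : Module.Dual ℂ V => φ x) h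
  simp only [LinearMap.sub_apply, LinearMap.smul_apply, LinearMap.zero_apply,
    smul_eq_mul] at this
  linear_combination this

lemma key_both [FiniteDimensional ℂ V] (P0 Pinf : V →ₗ[ℂ] V →ₗ[ℂ] ℂ) (h0 : ∀ v, P0 v v = 0) (hinf : ∀ v, Pinf v v = 0) :
    ∀ α ∉ exceptional P0 Pinf, ∀ β ∉ exceptional P0 Pinf,
    ∀ u ∈ LinearMap.ker (pencil P0 Pinf α), ∀ w ∈ LinearMap.ker (pencil P0 Pinf β),
      P0 u w = 0 ∧ Pinf u w = 0 := by
  have sk0 := skew_of_diag P0 h0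
  have skinf := skew_of_diag Pinf hinf
  intro α hα β hβ u hu w hw
  have hrankα : finrank ℂ (LinearMap.ker (pencil P0 Pinf α)) = genericCorank P0 Pinf :=
    le_antisymm (not_lt.mp hα) (generic_le P0 Pinf α)
  match α, β with
  | some a, some b =>
    by_cases hab : a = b
    · subst hab
      -- same point : use the rank-drop lemma with A = pencil a, B = Pinf
      have hPinf0 : Pinf u w = 0 := by
        apply ker_isotropic_aux (pencil P0 Pinf (some a)) Pinf
          (fun v => by simp [pencil, h0, hinf]) ?_ hu hw
        intro t ht
        have heq : pencil P0 Pinf (some a) + t • Pinf = pencil P0 Pinf (some (a - t)) := by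
          ext v x
          simp only [pencil, LinearMap.add_apply, LinearMap.sub_apply, LinearMap.smul_apply,
            smul_eq_mul]
          ring
        rw [heq, hrankα]
        exact generic_le P0 Pinf _
      exact ⟨by rw [mem_some P0 Pinf hu w, hPinf0, mul_zero], hPinf0⟩
    · -- distinct finite points
      have h1 : P0 u w = a * Pinf u w := mem_some P0 Pinf hu w
      have h2 : P0 w u = b * Pinf w u := mem_some P0 Pinf hw u
      have h3 : P0 u w = b * Pinf u w := by
        rw [sk0 u w, h2, skinf w u]
        ring
      have hPinf0 : Pinf u w = 0 := by
        have : (a - b) * Pinf u w = 0 := by linear_combination h3 - h1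
        rcases mul_eq_zero.mp this with h | h
        · exact absurd (sub_eq_zero.mp h) hab
        · exact h
      exact ⟨by rw [h1, hPinf0, mul_zero], hPinf0⟩
  | some a, none =>
    have hwk : Pinf w = 0 := hw
    have hPinf0 : Pinf u w = 0 := by rw [skinf u w, hwk]; simp
    exact ⟨by rw [mem_some P0 Pinf hu w, hPinf0, mul_zero], hPinf0⟩
  | none, some b =>
    have huk : Pinf u = 0 := hu
    have hPinf0 : Pinf u w = 0 := by rw [huk]; simp
    have h2 : P0 w u = b * Pinf w u := mem_some P0 Pinf hw u
    refine ⟨?_, hPinf0⟩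
    rw [sk0 u w, h2, skinf w u, hPinf0]
    ring
  | none, none =>
    have huk : Pinf u = 0 := hu
    have hPinf0 : Pinf u w = 0 := by rw [huk]; simp
    refine ⟨?_, hPinf0⟩
    -- same point at infinity : A = Pinf, B = P0
    apply ker_isotropic_aux Pinf P0 hinf ?_ hu hw
    intro t ht
    have heq : Pinf + t • P0 = t • pencil P0 Pinf (some (-t⁻¹)) := by
      ext v x
      simp only [pencil, LinearMap.add_apply, LinearMap.sub_apply, LinearMap.smul_apply,
        smul_eq_mul]
      field_simp
      ring
    rw [heq, LinearMap.ker_smul _ _ ht]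
    have : finrank ℂ (LinearMap.ker (pencil P0 Pinf none)) = genericCorank P0 Pinf := hrankα
    rw [show (Pinf : V →ₗ[ℂ] V →ₗ[ℂ] ℂ) = pencil P0 Pinf none from rfl, this]
    exact generic_le P0 Pinf _

/-- `L` is isotropic with respect to every form of the pencil. -/
theorem stmt8 [FiniteDimensional ℂ V] (P0 Pinf : V →ₗ[ℂ] V →ₗ[ℂ] ℂ)
    (h0 : ∀ v, P0 v v = 0) (hinf : ∀ v, Pinf v v = 0) :
    ∀ l : Option ℂ, ∀ u ∈ Lspace P0 Pinf, ∀ w ∈ Lspace P0 Pinf,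
      pencil P0 Pinf l u w = 0 := by
  have key := key_both P0 Pinf h0 hinf
  -- step 1 : u in a generic kernel pairs to zero with all of L
  have step1 : ∀ α ∉ exceptional P0 Pinf, ∀ u ∈ LinearMap.ker (pencil P0 Pinf α),
      ∀ w ∈ Lspace P0 Pinf, P0 u w = 0 ∧ Pinf u w = 0 := by
    intro α hα u hu w hw
    have hL : Lspace P0 Pinf ≤ LinearMap.ker (P0 u) ⊓ LinearMap.ker (Pinf u) := by
      apply iSup₂_le
      intro β hβ
      intro x hx
      obtain ⟨h1, h2⟩ := key α hα β hβ u hu x hx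
      exact Submodule.mem_inf.mpr ⟨h1, h2⟩
    obtain ⟨h1, h2⟩ := Submodule.mem_inf.mp (hL hw)
    exact ⟨h1, h2⟩
  -- step 2 : all of L pairs to zero with all of L
  have step2 : ∀ u ∈ Lspace P0 Pinf, ∀ w ∈ Lspace P0 Pinf,
      P0 u w = 0 ∧ Pinf u w = 0 := by
    intro u hu w hw
    have hL : Lspace P0 Pinf ≤ LinearMap.ker (P0.flip w) ⊓ LinearMap.ker (Pinf.flip w) := by
      apply iSup₂_le
      intro α hα
      intro x hx
      obtain ⟨h1, h2⟩ := step1 α hα x hx w hw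
      exact Submodule.mem_inf.mpr ⟨by simpa [LinearMap.flip_apply] using h1,
        by simpa [LinearMap.flip_apply] using h2⟩
    obtain ⟨h1, h2⟩ := Submodule.mem_inf.mp (hL hu)
    rw [LinearMap.mem_ker, LinearMap.flip_apply] at h1 h2
    exact ⟨h1, h2⟩
  intro l u hu w hw
  obtain ⟨h1, h2⟩ := step2 u hu w hw
  match l with
  | none => exact h2
  | some a => simp [pencil, h1, h2]
end

section
/- In the setting of a pencil P_λ = P₀ − λP∞ of skew-symmetric forms on a finite-dimensional complex space V, with L = Σ_{λ ∉ Λ} Ker P_λ (Λ the set of exceptional values where corank exceeds the generic corank r), the skew-orthogonal complement L^⊥ = {ξ ∈ V : P_λ(ξ, L) = 0} is the same subspace for every λ ∈ ℂ ∪ {∞}. -/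
/-! For a generic value `λ₀`, `Ker P_{λ₀}` lies in the span of the kernels at the other generic
values, because the kernel dimension of a pencil can only jump up at finitely many points. So for
any `λ₁`, `L` is spanned by kernels `Ker P_λ` with `λ ≠ λ₁` generic. If `ξ ⊥ L` for `P_{λ₁}` and
`w ∈ Ker P_λ`, then `P_λ(w, ξ) = 0 = P_{λ₁}(w, ξ)`; as `P_λ` and `P_{λ₁}` span the pencil,
`P_μ(w, ξ) = 0` for every `μ`. -/

open Module LinearMap

variable {V : Type*} [AddCommGroup V] [Module ℂ V]

open Module.End in
theorem Module.End.finite_setOf_not_injective_one_add_smul {K M : Type*} [Field K]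
    [AddCommGroup M] [Module K M] [FiniteDimensional K M] (k : Module.End K M) :
    {t : K | ¬Function.Injective ⇑(1 + t • k)}.Finite := by
  have hinj : Function.Injective fun t : K => -t⁻¹ := fun a b hab => by simpa using hab
  refine (k.finite_hasEigenvalue.preimage hinj.injOn).subset fun t ht => ?_
  obtain ⟨v, hv, hv0⟩ : ∃ v ∈ ker (1 + t • k), v ≠ 0 := by
    simpa [← ker_eq_bot, Submodule.eq_bot_iff] using ht
  have ht0 : t ≠ 0 := by rintro rfl; simp_all
  refine hasEigenvalue_of_hasEigenvector ⟨mem_eigenspace_iff.mpr ?_, hv0⟩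
  have : v + t • k v = 0 := by simpa using hv
  rw [neg_smul, eq_neg_iff_add_eq_zero, ← smul_right_inj ht0, smul_add, smul_smul,
    mul_inv_cancel₀ ht0, one_smul, add_comm, this, smul_zero]

namespace LinearMap

variable {K M N : Type*} [Field K] [AddCommGroup M] [Module K M] [FiniteDimensional K M]
  [AddCommGroup N] [Module K N]

/-- Upper semicontinuity of the kernel dimension along a line: on a complement `C` of `ker f`,
a left inverse `q` of `f` turns `f + t • g` into `1 + t • (q ∘ g)`, which is injective for all but
finitely many `t`. -/
theorem finite_setOf_finrank_ker_lt_finrank_ker_add_smul (f g : M →ₗ[K] N) :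
    {t : K | finrank K (ker f) < finrank K (ker (f + t • g))}.Finite := by
  obtain ⟨C, hC⟩ := (ker f).exists_isCompl
  obtain ⟨q, hq⟩ := (f.domRestrict C).exists_leftInverse_of_injective <| by
    rw [ker_eq_bot, injective_domRestrict_iff]; exact hC.disjoint.symm
  refine (Module.End.finite_setOf_not_injective_one_add_smul (q ∘ₗ g.domRestrict C)).subset
    fun t ht hinj => ?_
  have hdisj : Disjoint C (ker (f + t • g)) := by
    rw [← injective_domRestrict_iff]
    refine .of_comp (f := q) ?_
    convert hinj
    ext v
    simpa using congr($hq v)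
  have h₁ := Submodule.finrank_add_finrank_le_of_disjoint hdisj
  have h₂ := Submodule.finrank_add_eq_of_isCompl hC
  rw [Set.mem_ofPred_eq] at ht
  omega

/-- Writing `U` for the span of the kernels, the kernel of `(f + t • g).prod U.mkQ` is
`ker (f + t • g)` for `t ∈ S`, so by semicontinuity the kernel `ker f ⊓ U` of `f.prod U.mkQ` is
at least as large as `ker f`. -/
theorem ker_le_iSup_ker_add_smul (f g : M →ₗ[K] N)
    (hf : ∀ t : K, finrank K (ker f) ≤ finrank K (ker (f + t • g))) {S : Set K}
    (hS : S.Infinite) : ker f ≤ ⨆ t ∈ S, ker (f + t • g) := by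
  set U := ⨆ t ∈ S, ker (f + t • g)
  have hprod : ∀ t : K, f.prod U.mkQ + t • g.prod 0 = (f + t • g).prod U.mkQ := fun t => by
    ext v <;> simp
  obtain ⟨t, htS, ht⟩ := (hS.sdiff
    (finite_setOf_finrank_ker_lt_finrank_ker_add_smul (f.prod U.mkQ) (g.prod 0))).nonempty
  have hker : ker ((f + t • g).prod U.mkQ) = ker (f + t • g) := by
    rw [ker_prod, Submodule.ker_mkQ, inf_eq_left]
    exact le_iSup₂_of_le t htS le_rfl
  have hle : finrank K (ker f) ≤ finrank K ↥(ker f ⊓ U) := by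
    have ht : ¬finrank K (ker (f.prod U.mkQ)) < finrank K (ker (f.prod U.mkQ + t • g.prod 0)) :=
      ht
    rw [hprod, hker, ker_prod, Submodule.ker_mkQ, not_lt] at ht
    exact (hf t).trans ht
  exact inf_eq_left.mp (Submodule.eq_of_le_of_finrank_le inf_le_left hle)

end LinearMap

section Pencil

variable (P0 Pinf : V →ₗ[ℂ] V →ₗ[ℂ] ℂ)

lemma genericCorank_le_finrank_ker (l : Option ℂ) :
    genericCorank P0 Pinf ≤ finrank ℂ (ker (pencil P0 Pinf l)) :=
  Nat.sInf_le ⟨l, rfl⟩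

lemma finrank_ker_pencil_of_notMem_exceptional {l : Option ℂ} (hl : l ∉ exceptional P0 Pinf) :
    finrank ℂ (ker (pencil P0 Pinf l)) = genericCorank P0 Pinf :=
  (not_lt.mp hl).antisymm (genericCorank_le_finrank_ker P0 Pinf l)

/-- An affine chart of `ℂ ∪ {∞}` centred at `l₀`; at `∞`, `P∞ + t • P₀` is the nonzero multiple
`t • P_{-1/t}` for `t ≠ 0`. -/
lemma exists_ker_pencil_add_smul_eq (l₀ : Option ℂ) :
    ∃ (G : V →ₗ[ℂ] V →ₗ[ℂ] ℂ) (φ : ℂ → Option ℂ), φ 0 = l₀ ∧ φ.Injective ∧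
      ∀ t, ker (pencil P0 Pinf l₀ + t • G) = ker (pencil P0 Pinf (φ t)) := by
  cases l₀ with
  | some μ =>
    refine ⟨-Pinf, fun t => some (μ + t), by simp,
      Option.some_injective _ |>.comp (add_right_injective μ), fun t => ?_⟩
    simp only [pencil, add_smul, smul_neg]
    congr 1
    abel
  | none =>
    refine ⟨P0, fun t => if t = 0 then none else some (-t⁻¹), by simp, ?_, fun t => ?_⟩
    · intro a b hab
      by_cases ha : a = 0 <;> by_cases hb : b = 0 <;> simp_all
    · by_cases ht : t = 0
      · simp [ht, pencil]
      · have : Pinf + t • P0 = t • (P0 - (-t⁻¹) • Pinf) := by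
          rw [smul_sub, smul_smul, mul_neg, mul_inv_cancel₀ ht]
          simp [add_comm]
        simp only [pencil, if_neg ht, this, ker_smul _ _ ht]

/-- Two distinct members of the pencil span it. -/
lemma pencil_apply_eq_zero_of_ne {l₁ l₂ : Option ℂ} (hne : l₁ ≠ l₂) {w ξ : V}
    (h₁ : pencil P0 Pinf l₁ w ξ = 0) (h₂ : pencil P0 Pinf l₂ w ξ = 0) (l : Option ℂ) :
    pencil P0 Pinf l w ξ = 0 := by
  have key : P0 w ξ = 0 ∧ Pinf w ξ = 0 := by
    rcases l₁ with _ | a <;> rcases l₂ with _ | b <;> simp_all [pencil]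
    have hab : (b - a) * Pinf w ξ = 0 := by linear_combination h₁ - h₂
    have : Pinf w ξ = 0 := (mul_eq_zero.mp hab).resolve_left (sub_ne_zero.mpr (Ne.symm hne))
    simp_all
  rcases l with _ | c <;> simp [pencil, key.1, key.2]

variable [FiniteDimensional ℂ V]

lemma ker_pencil_le_iSup_ker_pencil_ne {l₀ : Option ℂ} (hl₀ : l₀ ∉ exceptional P0 Pinf) :
    ker (pencil P0 Pinf l₀) ≤ ⨆ l ∈ (exceptional P0 Pinf)ᶜ \ {l₀}, ker (pencil P0 Pinf l) := by
  obtain ⟨G, φ, hφ0, hφ, hker⟩ := exists_ker_pencil_add_smul_eq P0 Pinf l₀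
  have hr := finrank_ker_pencil_of_notMem_exceptional P0 Pinf hl₀
  have hfin : (φ ⁻¹' exceptional P0 Pinf).Finite := by
    convert finite_setOf_finrank_ker_lt_finrank_ker_add_smul (pencil P0 Pinf l₀) G using 1
    ext t
    change (_ : ℕ) < _ ↔ (_ : ℕ) < _
    rw [hker, hr]
  calc ker (pencil P0 Pinf l₀)
      ≤ ⨆ t ∈ φ ⁻¹' (exceptional P0 Pinf)ᶜ \ {0}, ker (pencil P0 Pinf l₀ + t • G) :=
        ker_le_iSup_ker_add_smul _ _ (fun t => hr ▸ hker t ▸ genericCorank_le_finrank_ker ..)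
          (hfin.infinite_compl.sdiff (Set.finite_singleton 0))
    _ ≤ _ := iSup₂_le fun t ht => hker t ▸
        le_iSup₂_of_le (φ t) ⟨ht.1, fun h => ht.2 (hφ (h.trans hφ0.symm))⟩ le_rfl

lemma Lspace_le_iSup_ker_pencil_ne (l₁ : Option ℂ) :
    Lspace P0 Pinf ≤ ⨆ l ∈ (exceptional P0 Pinf)ᶜ \ {l₁}, ker (pencil P0 Pinf l) := by
  refine iSup₂_le fun l hl => ?_
  by_cases h : l = l₁
  · exact h ▸ ker_pencil_le_iSup_ker_pencil_ne P0 Pinf hl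
  · exact le_iSup₂_of_le l ⟨hl, h⟩ le_rfl

end Pencil

theorem stmt9_general [FiniteDimensional ℂ V] (P0 Pinf : V →ₗ[ℂ] V →ₗ[ℂ] ℂ) :
    ∀ l₁ l₂ : Option ℂ,
      LinearMap.BilinForm.orthogonal (pencil P0 Pinf l₁) (Lspace P0 Pinf) =
      LinearMap.BilinForm.orthogonal (pencil P0 Pinf l₂) (Lspace P0 Pinf) := by
  suffices h : ∀ l₁ l₂ : Option ℂ,
      LinearMap.BilinForm.orthogonal (pencil P0 Pinf l₁) (Lspace P0 Pinf) ≤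
      LinearMap.BilinForm.orthogonal (pencil P0 Pinf l₂) (Lspace P0 Pinf) from
    fun l₁ l₂ => (h l₁ l₂).antisymm (h l₂ l₁)
  intro l₁ l₂ ξ hξ
  rw [LinearMap.BilinForm.mem_orthogonal_iff] at hξ ⊢
  suffices Lspace P0 Pinf ≤ ker ((pencil P0 Pinf l₂).flip ξ) from fun w hw => this hw
  refine (Lspace_le_iSup_ker_pencil_ne P0 Pinf l₁).trans (iSup₂_le fun l hl v hv => ?_)
  have hvL : v ∈ Lspace P0 Pinf :=
    (le_iSup₂_of_le l hl.1 le_rfl : ker (pencil P0 Pinf l) ≤ Lspace P0 Pinf) hv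
  exact pencil_apply_eq_zero_of_ne P0 Pinf hl.2 (by simp [mem_ker.mp hv]) (hξ v hvL) l₂

/-- The skew-orthogonal complement `L^⊥ = {ξ ∣ P_λ(ξ,L) = 0}` is the same subspace for
every `λ ∈ ℂ ∪ {∞}`. -/
theorem stmt9 [FiniteDimensional ℂ V] (P0 Pinf : V →ₗ[ℂ] V →ₗ[ℂ] ℂ)
    (h0 : ∀ v, P0 v v = 0) (hinf : ∀ v, Pinf v v = 0) :
    ∀ l₁ l₂ : Option ℂ,
      LinearMap.BilinForm.orthogonal (pencil P0 Pinf l₁) (Lspace P0 Pinf) =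
      LinearMap.BilinForm.orthogonal (pencil P0 Pinf l₂) (Lspace P0 Pinf) :=
  stmt9_general P0 Pinf
end

section
/- In the setting of a pencil of skew-symmetric forms P_λ = P₀ − λP∞ on finite-dimensional complex V with generic corank r, exceptional set Λ, and L = Σ_{λ ∉ Λ} Ker P_λ: if λ ∉ Λ then the form induced by P_λ on the quotient L^⊥/L is non-degenerate. -/
open Module LinearMap

variable {V : Type*} [AddCommGroup V] [Module ℂ V]

/-- If `λ ∉ Λ`, then the form induced by `P_λ` on `L^⊥ / L` is non-degenerate. -/
theorem stmt10 [FiniteDimensional ℂ V] (P0 Pinf : V →ₗ[ℂ] V →ₗ[ℂ] ℂ)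
    (h0 : ∀ v, P0 v v = 0) (hinf : ∀ v, Pinf v v = 0)
    (l : Option ℂ) (hl : l ∉ exceptional P0 Pinf) :
    ∀ ξ ∈ LinearMap.BilinForm.orthogonal (pencil P0 Pinf l) (Lspace P0 Pinf),
      (∀ η ∈ LinearMap.BilinForm.orthogonal (pencil P0 Pinf l) (Lspace P0 Pinf),
        pencil P0 Pinf l ξ η = 0) → ξ ∈ Lspace P0 Pinf := by
  classical
  set B := pencil P0 Pinf l with hB
  have hAlt : B.IsAlt := by
    intro v
    cases l with
    | none => simpa [hB, pencil] using hinf v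
    | some c => simp [hB, pencil, h0 v, hinf v]
  have hrefl : B.IsRefl := hAlt.isRefl
  set L := Lspace P0 Pinf with hLdef
  -- ker B ≤ L
  have hker : LinearMap.ker B ≤ L := by
    rw [hLdef, Lspace]
    exact le_iSup₂ (f := fun l' (_ : l' ∈ {l : Option ℂ | l ∉ exceptional P0 Pinf}) =>
      LinearMap.ker (pencil P0 Pinf l')) l hl
  -- radical = ker
  have hrad : LinearMap.BilinForm.orthogonal B ⊤ = LinearMap.ker B := by
    ext x
    simp only [LinearMap.BilinForm.mem_orthogonal_iff, LinearMap.mem_ker]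
    constructor
    · intro h
      ext y
      exact hrefl y x (h y trivial)
    · intro h n _
      exact hrefl x n (by rw [h]; rfl)
  have h1 := LinearMap.BilinForm.finrank_add_finrank_orthogonal (B := B) hrefl L
  have h2 := LinearMap.BilinForm.finrank_add_finrank_orthogonal (B := B) hrefl (LinearMap.BilinForm.orthogonal B L)
  rw [hrad, inf_eq_right.mpr hker] at h1
  have hradle : LinearMap.ker B ≤ LinearMap.BilinForm.orthogonal B L := by
    rw [← hrad]; exact LinearMap.BilinForm.orthogonal_le le_top
  rw [hrad, inf_eq_right.mpr hradle] at h2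
  have hfin : finrank ℂ (LinearMap.BilinForm.orthogonal B (LinearMap.BilinForm.orthogonal B L)) ≤ finrank ℂ L := by omega
  have heq : LinearMap.BilinForm.orthogonal B (LinearMap.BilinForm.orthogonal B L) = L :=
    (Submodule.eq_of_le_of_finrank_le (LinearMap.BilinForm.le_orthogonal_orthogonal hrefl) hfin).symm
  intro ξ hξ hξ'
  rw [← heq]
  intro η hη
  exact hrefl ξ η (hξ' η hη)
end

section
/- In the setting of a pencil of skew-symmetric forms P_λ = P₀ − λP∞ on finite-dimensional complex V with Λ the exceptional set, generic corank r, and L = Σ_{λ ∉ Λ} Ker P_λ: for every λ ∈ Λ, dim(Ker P_λ ∩ L) = r. -/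
open Module LinearMap

variable {V : Type*} [AddCommGroup V] [Module ℂ V]

section auxlemmas
open Polynomial
variable {W U : Type*} [AddCommGroup W] [Module ℂ W] [AddCommGroup U] [Module ℂ U]

/-- M2: a nonzero "minor" certifies rank at least k. -/
lemma aux_le_rank [FiniteDimensional ℂ W] [FiniteDimensional ℂ U] (f : W →ₗ[ℂ] U) {k : ℕ}
    (x : Fin k → W) (u : Fin k → U →ₗ[ℂ] ℂ)
    (h : (Matrix.of fun i j => u i (f (x j))).det ≠ 0) :
    k ≤ finrank ℂ (LinearMap.range f) := by
  classical
  set M : Matrix (Fin k) (Fin k) ℂ := Matrix.of fun i j => u i (f (x j)) with hM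
  have hunit : IsUnit M.det := h.isUnit
  -- the linear map e : ℂ^k → W
  set e : (Fin k → ℂ) →ₗ[ℂ] W := ∑ j, (LinearMap.proj j).smulRight (x j) with he
  have he_apply : ∀ c, e c = ∑ j, c j • x j := by
    intro c; simp [he, LinearMap.sum_apply]
  set G : U →ₗ[ℂ] (Fin k → ℂ) := LinearMap.pi (fun i => u i) with hG
  set g : (Fin k → ℂ) →ₗ[ℂ] (Fin k → ℂ) := G.comp (f.comp e) with hg
  have hgv : ∀ c, g c = M.mulVec c := by
    intro c
    funext i
    simp only [hg, LinearMap.comp_apply, hG, LinearMap.pi_apply, he_apply, map_sum, map_smul]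
    simp [Matrix.mulVec, dotProduct, hM, smul_eq_mul, mul_comm]
  have hsurj : Function.Surjective g := by
    intro y
    refine ⟨(M⁻¹).mulVec y, ?_⟩
    rw [hgv, Matrix.mulVec_mulVec, Matrix.mul_nonsing_inv _ hunit, Matrix.one_mulVec]
  have h1 : LinearMap.range g = ⊤ := LinearMap.range_eq_top.mpr hsurj
  have h2 : finrank ℂ (LinearMap.range g) = k := by
    rw [h1, finrank_top]; simp
  have h3 : LinearMap.range g ≤ (LinearMap.range f).map G := by
    rw [hg, LinearMap.range_comp]
    exact Submodule.map_mono (LinearMap.range_comp_le_range _ _)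
  calc k = finrank ℂ (LinearMap.range g) := h2.symm
    _ ≤ finrank ℂ ((LinearMap.range f).map G) := Submodule.finrank_mono h3
    _ ≤ finrank ℂ (LinearMap.range f) := Submodule.finrank_map_le _ _

/-- M1: rank at least k gives a nonzero minor. -/
lemma aux_exists_det_ne [FiniteDimensional ℂ W] [FiniteDimensional ℂ U] (f : W →ₗ[ℂ] U) {k : ℕ}
    (hk : k ≤ finrank ℂ (LinearMap.range f)) :
    ∃ (x : Fin k → W) (u : Fin k → U →ₗ[ℂ] ℂ),
      (Matrix.of fun i j => u i (f (x j))).det ≠ 0 := by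
  classical
  obtain ⟨v, hv⟩ := exists_linearIndependent_of_le_finrank (R := ℂ) (M := ↥(LinearMap.range f)) hk
  have hy : LinearIndependent ℂ (fun i => ((v i : ↥(LinearMap.range f)) : U)) :=
    hv.map' (LinearMap.range f).subtype (Submodule.ker_subtype _)
  set y : Fin k → U := fun i => ((v i : ↥(LinearMap.range f)) : U) with hydef
  have hxy : ∀ i, ∃ w : W, f w = y i := fun i => (v i).2
  choose x hx using hxy
  -- linear map g : ℂ^k → U, c ↦ ∑ c j • y j, injective
  set g : (Fin k → ℂ) →ₗ[ℂ] U := ∑ j, (LinearMap.proj j).smulRight (y j) with hgdef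
  have hg_apply : ∀ c, g c = ∑ j, c j • y j := by
    intro c; simp [hgdef, LinearMap.sum_apply]
  have hginj : Function.Injective g := by
    rw [← LinearMap.ker_eq_bot]
    rw [eq_bot_iff]
    intro c hc
    have : ∑ j, c j • y j = 0 := by rw [← hg_apply]; exact hc
    have := Fintype.linearIndependent_iff.mp hy c this
    ext j; exact this j
  have hsurj : Function.Surjective g.dualMap := LinearMap.dualMap_surjective_iff.mpr hginj
  choose u hu using fun i => hsurj (LinearMap.proj i)
  refine ⟨x, u, ?_⟩
  have hentry : ∀ i j, u i (f (x j)) = if i = j then (1:ℂ) else 0 := by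
    intro i j
    have h1 : f (x j) = g (Pi.single j 1) := by
      rw [hx, hg_apply]
      rw [Finset.sum_eq_single j]
      · simp
      · intro b _ hb; simp [Pi.single_apply, hb]
      · simp
    rw [h1]
    have h2 : u i (g (Pi.single j 1)) = (g.dualMap (u i)) (Pi.single j 1) := rfl
    rw [h2, hu i]
    simp [LinearMap.proj_apply, Pi.single_apply]
  have : (Matrix.of fun i j => u i (f (x j))) = (1 : Matrix (Fin k) (Fin k) ℂ) := by
    ext i j
    rw [Matrix.of_apply, hentry, Matrix.one_apply]
  rw [this, Matrix.det_one]
  exact one_ne_zero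

/-- semicontinuity at finite points -/
lemma aux_rank_le_finite [FiniteDimensional ℂ W] [FiniteDimensional ℂ U]
    (C0 Cinf : W →ₗ[ℂ] U) (ρ : ℕ) {T : Set ℂ} (hT : T.Infinite)
    (h : ∀ μ ∈ T, finrank ℂ (LinearMap.range (C0 - μ • Cinf)) ≤ ρ) (lam : ℂ) :
    finrank ℂ (LinearMap.range (C0 - lam • Cinf)) ≤ ρ := by
  classical
  by_contra hlt
  push_neg at hlt
  obtain ⟨x, u, hdet⟩ := aux_exists_det_ne (C0 - lam • Cinf) (k := ρ + 1) hlt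
  set Mp : Matrix (Fin (ρ+1)) (Fin (ρ+1)) ℂ[X] :=
    Matrix.of fun i j => Polynomial.C (u i (C0 (x j))) - Polynomial.X * Polynomial.C (u i (Cinf (x j))) with hMp
  set p : ℂ[X] := Mp.det with hp
  have heval : ∀ μ : ℂ, p.eval μ = (Matrix.of fun i j => u i ((C0 - μ • Cinf) (x j))).det := by
    intro μ
    have h1 : p.eval μ = (Polynomial.evalRingHom μ) p := rfl
    rw [h1, hp, RingHom.map_det]
    congr 1
    ext i j
    simp only [hMp, RingHom.mapMatrix_apply, Matrix.map_apply, Matrix.of_apply,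
      Polynomial.coe_evalRingHom, eval_sub, eval_mul, eval_C, eval_X,
      LinearMap.sub_apply, LinearMap.smul_apply, map_sub, map_smul, smul_eq_mul]
  have hroots : {z : ℂ | p.IsRoot z}.Infinite := by
    apply hT.mono
    intro μ hμ
    simp only [Set.mem_setOf_eq, Polynomial.IsRoot, heval]
    by_contra hne
    have := aux_le_rank (C0 - μ • Cinf) x u hne
    have := h μ hμ
    omega
  have hp0 : p = 0 := p.eq_zero_of_infinite_isRoot hroots
  apply hdet
  rw [← heval lam, hp0, Polynomial.eval_zero]

lemma aux_range_smul (f : W →ₗ[ℂ] U) {c : ℂ} (hc : c ≠ 0) :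
    LinearMap.range (c • f) = LinearMap.range f := by
  apply le_antisymm
  · rintro _ ⟨w, rfl⟩
    exact ⟨c • w, by simp [map_smul]⟩
  · rintro _ ⟨w, rfl⟩
    exact ⟨c⁻¹ • w, by simp [map_smul, smul_smul, inv_mul_cancel₀ hc]⟩

/-- semicontinuity at infinity -/
lemma aux_rank_le_inf [FiniteDimensional ℂ W] [FiniteDimensional ℂ U]
    (C0 Cinf : W →ₗ[ℂ] U) (ρ : ℕ) {T : Set ℂ} (hT : T.Infinite)
    (h : ∀ μ ∈ T, finrank ℂ (LinearMap.range (C0 - μ • Cinf)) ≤ ρ) :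
    finrank ℂ (LinearMap.range Cinf) ≤ ρ := by
  classical
  set T' : Set ℂ := (fun μ : ℂ => μ⁻¹) '' (T \ {0}) with hT'
  have hT'inf : T'.Infinite :=
    ((hT.diff (Set.finite_singleton 0)).image (Set.injOn_of_injective inv_injective))
  have h' : ∀ ε ∈ T', finrank ℂ (LinearMap.range (Cinf - ε • C0)) ≤ ρ := by
    rintro ε ⟨μ, ⟨hμT, hμ0⟩, rfl⟩
    simp only [Set.mem_singleton_iff] at hμ0
    have hkey : Cinf - μ⁻¹ • C0 = (-μ⁻¹) • (C0 - μ • Cinf) := by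
      ext w
      simp only [LinearMap.sub_apply, LinearMap.smul_apply, smul_sub, smul_smul, neg_mul,
        inv_mul_cancel₀ hμ0, neg_smul, one_smul, sub_neg_eq_add, LinearMap.add_apply,
        LinearMap.neg_apply]
      abel
    rw [hkey, aux_range_smul _ (by simpa using hμ0)]
    exact h μ hμT
  have := aux_rank_le_finite Cinf C0 ρ hT'inf h' 0
  have h0 : Cinf - (0:ℂ) • C0 = Cinf := by simp
  rwa [h0] at this

end auxlemmas


section pencils
variable (P0 Pinf : V →ₗ[ℂ] V →ₗ[ℂ] ℂ)

lemma pencil_some_apply (μ : ℂ) (x : V) :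
    pencil P0 Pinf (some μ) x = P0 x - μ • Pinf x := rfl

lemma pencil_none_apply (x : V) : pencil P0 Pinf none x = Pinf x := rfl

/-- key scalar relation: on `Ker P_s`, all other members of the pencil are proportional. -/
lemma pencil_rel {s a b : Option ℂ} (ha : a ≠ s) (hb : b ≠ s) {x : V}
    (hx : x ∈ LinearMap.ker (pencil P0 Pinf s)) :
    ∃ c : ℂ, pencil P0 Pinf a x = c • pencil P0 Pinf b x := by
  rw [LinearMap.mem_ker] at hx
  match s, a, b with
  | none, none, _ => exact absurd rfl ha
  | none, _, none => exact absurd rfl hb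
  | none, some α, some β =>
      have hP : Pinf x = 0 := hx
      refine ⟨1, ?_⟩
      rw [pencil_some_apply, pencil_some_apply, hP]
      simp
  | some μ, a, b =>
      have hP : P0 x = μ • Pinf x := by
        have : P0 x - μ • Pinf x = 0 := hx
        linear_combination (norm := module) this
      match a, b with
      | none, none => exact ⟨1, by simp⟩
      | none, some β =>
          have hβ : β ≠ μ := fun h => hb (by rw [h])
          refine ⟨(μ - β)⁻¹, ?_⟩
          rw [pencil_none_apply, pencil_some_apply, hP, ← sub_smul, smul_smul,
            inv_mul_cancel₀ (sub_ne_zero.mpr (Ne.symm hβ)), one_smul]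
      | some α, none =>
          refine ⟨μ - α, ?_⟩
          rw [pencil_some_apply, pencil_none_apply, hP, ← sub_smul]
      | some α, some β =>
          have hβ : β ≠ μ := fun h => hb (by rw [h])
          refine ⟨(μ - α) * (μ - β)⁻¹, ?_⟩
          rw [pencil_some_apply, pencil_some_apply, hP, ← sub_smul, ← sub_smul, smul_smul,
            mul_assoc, inv_mul_cancel₀ (sub_ne_zero.mpr (Ne.symm hβ)), mul_one]

lemma map_ker_pencil_eq {s a b : Option ℂ} (ha : a ≠ s) (hb : b ≠ s) :
    (LinearMap.ker (pencil P0 Pinf s)).map (pencil P0 Pinf a) =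
      (LinearMap.ker (pencil P0 Pinf s)).map (pencil P0 Pinf b) := by
  have key : ∀ {a b : Option ℂ}, a ≠ s → b ≠ s →
      (LinearMap.ker (pencil P0 Pinf s)).map (pencil P0 Pinf a) ≤
        (LinearMap.ker (pencil P0 Pinf s)).map (pencil P0 Pinf b) := by
    intro a b ha hb
    rintro _ ⟨x, hx, rfl⟩
    obtain ⟨c, hc⟩ := pencil_rel P0 Pinf ha hb hx
    exact ⟨c • x, Submodule.smul_mem _ c hx, by rw [map_smul, hc]⟩
  exact le_antisymm (key ha hb) (key hb ha)

end pencils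

section main
variable [FiniteDimensional ℂ V] (P0 Pinf : V →ₗ[ℂ] V →ₗ[ℂ] ℂ)

lemma aux_r_le (a : Option ℂ) :
    genericCorank P0 Pinf ≤ finrank ℂ (LinearMap.ker (pencil P0 Pinf a)) :=
  Nat.sInf_le ⟨a, rfl⟩

lemma aux_not_exceptional {a : Option ℂ} (ha : a ∉ exceptional P0 Pinf) :
    finrank ℂ (LinearMap.ker (pencil P0 Pinf a)) = genericCorank P0 Pinf := by
  have h1 := aux_r_le P0 Pinf a
  simp only [exceptional, Set.mem_setOf_eq, not_lt] at ha
  omega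

lemma aux_ker_le_L {a : Option ℂ} (ha : a ∉ exceptional P0 Pinf) :
    LinearMap.ker (pencil P0 Pinf a) ≤ Lspace P0 Pinf := by
  have h : a ∈ {l : Option ℂ | l ∉ exceptional P0 Pinf} := ha
  exact le_biSup (f := fun l => LinearMap.ker (pencil P0 Pinf l)) h

/-- rank-nullity for the restriction of `pencil a` to `L`. -/
lemma aux_rank_nullity (a : Option ℂ) :
    finrank ℂ ↥(LinearMap.ker (pencil P0 Pinf a) ⊓ Lspace P0 Pinf) +
      finrank ℂ ↥((Lspace P0 Pinf).map (pencil P0 Pinf a)) = finrank ℂ ↥(Lspace P0 Pinf) := by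
  set L := Lspace P0 Pinf
  set f := (pencil P0 Pinf a).comp L.subtype with hf
  have h1 : LinearMap.range f = L.map (pencil P0 Pinf a) := by
    rw [hf, LinearMap.range_comp, Submodule.range_subtype]
  have h2 : LinearMap.ker f = (LinearMap.ker (pencil P0 Pinf a) ⊓ L).comap L.subtype := by
    rw [hf, LinearMap.ker_comp]
    ext x
    simp [Submodule.mem_comap, x.2]
  have h3 : finrank ℂ (LinearMap.ker f) =
      finrank ℂ ↥(LinearMap.ker (pencil P0 Pinf a) ⊓ L) := by
    rw [h2]
    exact (Submodule.comapSubtypeEquivOfLe inf_le_right).finrank_eq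
  have h4 := LinearMap.finrank_range_add_finrank_ker f
  rw [h1, h3] at h4
  omega

/-- there are infinitely many good finite parameters. -/
lemma aux_good_infinite : {μ : ℂ | (some μ) ∉ exceptional P0 Pinf}.Infinite := by
  classical
  by_contra hfin
  rw [Set.not_infinite] at hfin
  set n := finrank ℂ V
  set r := genericCorank P0 Pinf
  have hkn : ∀ a : Option ℂ, finrank ℂ (LinearMap.range (pencil P0 Pinf a)) +
      finrank ℂ (LinearMap.ker (pencil P0 Pinf a)) = n :=
    fun a => LinearMap.finrank_range_add_finrank_ker _
  have hT1 : ({μ : ℂ | (some μ) ∉ exceptional P0 Pinf}ᶜ).Infinite := hfin.infinite_compl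
  have hbad : ∀ μ ∈ {μ : ℂ | (some μ) ∉ exceptional P0 Pinf}ᶜ,
      finrank ℂ (LinearMap.range (P0 - μ • Pinf)) ≤ n - (r + 1) := by
    intro μ hμ
    simp only [Set.mem_compl_iff, Set.mem_setOf_eq, not_not, exceptional] at hμ
    have h1 := hkn (some μ)
    have h2 : pencil P0 Pinf (some μ) = P0 - μ • Pinf := rfl
    rw [h2] at h1 hμ
    omega
  have hrplus : r + 1 ≤ n := by
    obtain ⟨μ, hμ⟩ := hT1.nonempty
    simp only [Set.mem_compl_iff, Set.mem_setOf_eq, not_not, exceptional] at hμ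
    have := hkn (some μ)
    omega
  have hall := fun lam => aux_rank_le_finite P0 Pinf (n - (r+1)) hT1 hbad lam
  have hinfr := aux_rank_le_inf P0 Pinf (n - (r+1)) hT1 hbad
  have hklarge : ∀ a : Option ℂ, r + 1 ≤ finrank ℂ (LinearMap.ker (pencil P0 Pinf a)) := by
    intro a
    have h1 := hkn a
    match a with
    | none =>
        have h2 : pencil P0 Pinf none = Pinf := rfl
        rw [h2] at h1 ⊢
        omega
    | some μ =>
        have h2 : pencil P0 Pinf (some μ) = P0 - μ • Pinf := rfl
        rw [h2] at h1 ⊢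
        have := hall μ
        omega
  have hmem := Nat.sInf_mem (Set.range_nonempty
    (fun l : Option ℂ => finrank ℂ ↥(LinearMap.ker (pencil P0 Pinf l))))
  obtain ⟨a, ha⟩ := hmem
  have hra : finrank ℂ ↥(LinearMap.ker (pencil P0 Pinf a)) = r := ha
  have := hklarge a
  omega

end main

/-- For every `λ ∈ Λ`, `dim (Ker P_λ ∩ L) = r`. -/
theorem stmt11 [FiniteDimensional ℂ V] (P0 Pinf : V →ₗ[ℂ] V →ₗ[ℂ] ℂ)
    (h0 : ∀ v, P0 v v = 0) (hinf : ∀ v, Pinf v v = 0)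
    (l : Option ℂ) (hl : l ∈ exceptional P0 Pinf) :
    finrank ℂ ↥(LinearMap.ker (pencil P0 Pinf l) ⊓ Lspace P0 Pinf) =
      genericCorank P0 Pinf := by
  classical
  -- a good finite point b
  obtain ⟨μ₀, hμ₀⟩ := (aux_good_infinite P0 Pinf).nonempty
  set b : Option ℂ := some μ₀ with hbdef
  have hbgood : b ∉ exceptional P0 Pinf := hμ₀
  have hbl : b ≠ l := fun h => hbgood (h ▸ hl)
  have hKbL : LinearMap.ker (pencil P0 Pinf b) ≤ Lspace P0 Pinf :=
    aux_ker_le_L P0 Pinf hbgood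
  have hKbdim : finrank ℂ ↥(LinearMap.ker (pencil P0 Pinf b) ⊓ Lspace P0 Pinf) =
      genericCorank P0 Pinf := by
    rw [inf_eq_left.mpr hKbL]
    exact aux_not_exceptional P0 Pinf hbgood
  have hRNl := aux_rank_nullity P0 Pinf l
  have hRNb := aux_rank_nullity P0 Pinf b
  -- upper bound via image comparison
  have hmaple : (Lspace P0 Pinf).map (pencil P0 Pinf b) ≤
      (Lspace P0 Pinf).map (pencil P0 Pinf l) := by
    conv_lhs => rw [Lspace, Submodule.map_iSup]
    apply iSup_le
    intro s
    rw [Submodule.map_iSup]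
    apply iSup_le
    intro hs
    by_cases hsb : s = b
    · rintro _ ⟨x, hx, rfl⟩
      have hx0 : pencil P0 Pinf b x = 0 := by rw [← hsb]; exact hx
      rw [hx0]
      exact Submodule.zero_mem _
    · have hsl : l ≠ s := fun h => hs (h ▸ hl)
      rw [map_ker_pencil_eq P0 Pinf (Ne.symm hsb) hsl]
      exact Submodule.map_mono (aux_ker_le_L P0 Pinf hs)
  have hrank_mono : finrank ℂ ↥((Lspace P0 Pinf).map (pencil P0 Pinf b)) ≤
      finrank ℂ ↥((Lspace P0 Pinf).map (pencil P0 Pinf l)) := Submodule.finrank_mono hmaple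
  -- lower bound via semicontinuity on the restricted pencil
  set C0 : ↥(Lspace P0 Pinf) →ₗ[ℂ] (V →ₗ[ℂ] ℂ) := P0.comp (Lspace P0 Pinf).subtype with hC0
  set Cinf : ↥(Lspace P0 Pinf) →ₗ[ℂ] (V →ₗ[ℂ] ℂ) :=
    Pinf.comp (Lspace P0 Pinf).subtype with hCinf
  have hcomp : ∀ μ : ℂ, C0 - μ • Cinf =
      (pencil P0 Pinf (some μ)).comp (Lspace P0 Pinf).subtype := by
    intro μ; ext x; rfl
  have hcompn : Cinf = (pencil P0 Pinf none).comp (Lspace P0 Pinf).subtype := rfl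
  have hrangecomp : ∀ a : Option ℂ,
      LinearMap.range ((pencil P0 Pinf a).comp (Lspace P0 Pinf).subtype) =
        (Lspace P0 Pinf).map (pencil P0 Pinf a) := by
    intro a; rw [LinearMap.range_comp, Submodule.range_subtype]
  have hgoodbound : ∀ μ ∈ {μ : ℂ | (some μ) ∉ exceptional P0 Pinf},
      finrank ℂ (LinearMap.range (C0 - μ • Cinf)) ≤
        finrank ℂ ↥(Lspace P0 Pinf) - genericCorank P0 Pinf := by
    intro μ hμ
    have h1 := aux_rank_nullity P0 Pinf (some μ)
    have h2 : finrank ℂ ↥(LinearMap.ker (pencil P0 Pinf (some μ)) ⊓ Lspace P0 Pinf) =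
        genericCorank P0 Pinf := by
      rw [inf_eq_left.mpr (aux_ker_le_L P0 Pinf hμ)]
      exact aux_not_exceptional P0 Pinf hμ
    rw [hcomp μ, hrangecomp (some μ)]
    omega
  have hlower : finrank ℂ ↥((Lspace P0 Pinf).map (pencil P0 Pinf l)) ≤
      finrank ℂ ↥(Lspace P0 Pinf) - genericCorank P0 Pinf := by
    match l with
    | some lam =>
        have := aux_rank_le_finite C0 Cinf
          (finrank ℂ ↥(Lspace P0 Pinf) - genericCorank P0 Pinf)
          (aux_good_infinite P0 Pinf) hgoodbound lam
        rwa [hcomp lam, hrangecomp (some lam)] at this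
    | none =>
        have := aux_rank_le_inf C0 Cinf
          (finrank ℂ ↥(Lspace P0 Pinf) - genericCorank P0 Pinf)
          (aux_good_infinite P0 Pinf) hgoodbound
        rwa [hcompn, hrangecomp none] at this
  have hrL : genericCorank P0 Pinf ≤ finrank ℂ ↥(Lspace P0 Pinf) := by
    rw [← hKbdim]
    exact Submodule.finrank_mono inf_le_right
  omega
end

section
/- In the setting of a pencil of skew-symmetric forms P_λ = P₀ − λP∞ on finite-dimensional complex V with exceptional set Λ and L = Σ_{λ ∉ Λ} Ker P_λ: for λ ∈ Λ and any α ∈ ℂ ∪ {∞}, the kernel of the restriction of P_α to Ker P_λ contains Ker P_λ ∩ L. -/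
open Module LinearMap

variable {V : Type*} [AddCommGroup V] [Module ℂ V]

/-- Skew-symmetry from the alternating property. -/
lemma skew_aux (B : V →ₗ[ℂ] V →ₗ[ℂ] ℂ) (h : ∀ v, B v v = 0) (x y : V) :
    B x y = - B y x := by
  have h1 := h (x + y)
  simp only [map_add, LinearMap.add_apply] at h1
  have h2 := h x
  have h3 := h y
  linear_combination h1 - h2 - h3

/-- Kernels of pencil members with distinct parameters are orthogonal w.r.t. both forms. -/
lemma orth_aux (P0 Pinf : V →ₗ[ℂ] V →ₗ[ℂ] ℂ)
    (h0 : ∀ v, P0 v v = 0) (hinf : ∀ v, Pinf v v = 0)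
    {μ ν : Option ℂ} (hne : μ ≠ ν) {x y : V}
    (hx : x ∈ LinearMap.ker (pencil P0 Pinf μ))
    (hy : y ∈ LinearMap.ker (pencil P0 Pinf ν)) :
    P0 x y = 0 ∧ Pinf x y = 0 := by
  rw [LinearMap.mem_ker] at hx hy
  match μ, ν with
  | none, none => exact absurd rfl hne
  | none, some b =>
      have hxz : ∀ z, Pinf x z = 0 := fun z => by
        have := congrArg (fun f => f z) hx
        simpa [pencil] using this
      have hyz : ∀ z, P0 y z = b * Pinf y z := fun z => by
        have := congrArg (fun f => f z) hy
        simpa [pencil, sub_eq_zero] using this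
      have hPinf : Pinf x y = 0 := hxz y
      refine ⟨?_, hPinf⟩
      have h1 : P0 x y = - P0 y x := skew_aux P0 h0 x y
      have h2 : Pinf y x = - Pinf x y := skew_aux Pinf hinf y x
      rw [h1, hyz x, h2, hPinf]
      ring
  | some a, none =>
      have hyz : ∀ z, Pinf y z = 0 := fun z => by
        have := congrArg (fun f => f z) hy
        simpa [pencil] using this
      have hxz : ∀ z, P0 x z = a * Pinf x z := fun z => by
        have := congrArg (fun f => f z) hx
        simpa [pencil, sub_eq_zero] using this
      have hPinf : Pinf x y = 0 := by
        rw [skew_aux Pinf hinf x y, hyz x, neg_zero]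
      exact ⟨by rw [hxz y, hPinf, mul_zero], hPinf⟩
  | some a, some b =>
      have hab : a ≠ b := fun h => hne (by rw [h])
      have hxz : ∀ z, P0 x z = a * Pinf x z := fun z => by
        have := congrArg (fun f => f z) hx
        simpa [pencil, sub_eq_zero] using this
      have hyz : ∀ z, P0 y z = b * Pinf y z := fun z => by
        have := congrArg (fun f => f z) hy
        simpa [pencil, sub_eq_zero] using this
      have hPinf : Pinf x y = 0 := by
        have h1 : P0 x y = - P0 y x := skew_aux P0 h0 x y
        have h2 : Pinf y x = - Pinf x y := skew_aux Pinf hinf y x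
        have key : (a - b) * Pinf x y = 0 := by
          have := h1
          rw [hxz y, hyz x, h2] at this
          linear_combination this
        have := mul_eq_zero.mp key
        rcases this with h | h
        · exact absurd (sub_eq_zero.mp h) hab
        · exact h
      exact ⟨by rw [hxz y, hPinf, mul_zero], hPinf⟩

/-- For `λ ∈ Λ` and any `α ∈ ℂ ∪ {∞}`, the kernel of the restriction of `P_α` to
`Ker P_λ` contains `Ker P_λ ∩ L`. -/
theorem stmt12 [FiniteDimensional ℂ V] (P0 Pinf : V →ₗ[ℂ] V →ₗ[ℂ] ℂ)
    (h0 : ∀ v, P0 v v = 0) (hinf : ∀ v, Pinf v v = 0)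
    (l : Option ℂ) (hl : l ∈ exceptional P0 Pinf) (α : Option ℂ) :
    ∀ ξ ∈ LinearMap.ker (pencil P0 Pinf l) ⊓ Lspace P0 Pinf,
      ∀ η ∈ LinearMap.ker (pencil P0 Pinf l), pencil P0 Pinf α ξ η = 0 := by
  -- the submodule of vectors `P_α`-orthogonal to `Ker P_λ`
  set N : Submodule ℂ V :=
    ⨅ η : LinearMap.ker (pencil P0 Pinf l),
      LinearMap.ker ((pencil P0 Pinf α).flip (η : V)) with hN
  have hLN : Lspace P0 Pinf ≤ N := by
    rw [Lspace]
    refine iSup₂_le fun μ hμ => ?_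
    intro x hx
    rw [hN, Submodule.mem_iInf]
    rintro ⟨η, hη⟩
    rw [LinearMap.mem_ker, LinearMap.flip_apply]
    have hne : μ ≠ l := fun h => hμ (h ▸ hl)
    obtain ⟨h1, h2⟩ := orth_aux P0 Pinf h0 hinf hne hx hη
    cases α with
    | none => simpa [pencil] using h2
    | some c => simp [pencil, h1, h2]
  rintro ξ ⟨hξk, hξL⟩ η hη
  have := hLN hξL
  rw [hN, Submodule.mem_iInf] at this
  have := this ⟨η, hη⟩
  rwa [LinearMap.mem_ker, LinearMap.flip_apply] at this
end

section
/- In the recursion operator setting (∞ ∉ Λ, R = P∞^{-1}P₀ on L^⊥/L), the eigenspaces of R for distinct eigenvalues are pairwise orthogonal with respect to the form induced by P_λ on L^⊥/L, for every λ ∈ ℂ. -/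
open Module LinearMap

variable {V : Type*} [AddCommGroup V] [Module ℂ V]

/-- The common skew-orthogonal complement `L^⊥` (computed here with `P_∞`). -/
noncomputable def Lperp (P0 Pinf : V →ₗ[ℂ] V →ₗ[ℂ] ℂ) : Submodule ℂ V :=
  LinearMap.BilinForm.orthogonal (pencil P0 Pinf none) (Lspace P0 Pinf)

/-- `L` viewed as a submodule of `L^⊥`. -/
noncomputable def LinPerp (P0 Pinf : V →ₗ[ℂ] V →ₗ[ℂ] ℂ) : Submodule ℂ ↥(Lperp P0 Pinf) :=
  (Lspace P0 Pinf).comap (Lperp P0 Pinf).subtype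

/-- The quotient `L^⊥ / L`, carrying the recursion operator `R = P_∞⁻¹ P₀`. -/
abbrev Qspace (P0 Pinf : V →ₗ[ℂ] V →ₗ[ℂ] ℂ) := ↥(Lperp P0 Pinf) ⧸ LinPerp P0 Pinf

/-- Eigenspaces of the recursion operator for distinct eigenvalues are pairwise
orthogonal with respect to (the form induced on `L^⊥/L` by) `P_λ`, for every `λ ∈ ℂ`. -/
theorem stmt14 [FiniteDimensional ℂ V] (P0 Pinf : V →ₗ[ℂ] V →ₗ[ℂ] ℂ)
    (h0 : ∀ v, P0 v v = 0) (hinf : ∀ v, Pinf v v = 0)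
    (hinfreg : none ∉ exceptional P0 Pinf)
    (R : Qspace P0 Pinf →ₗ[ℂ] Qspace P0 Pinf)
    (hR : ∀ ξ ξ' : ↥(Lperp P0 Pinf),
      R (Submodule.Quotient.mk ξ) = Submodule.Quotient.mk ξ' →
      ∀ η : ↥(Lperp P0 Pinf),
        pencil P0 Pinf none (ξ' : V) (η : V) = pencil P0 Pinf (some 0) (ξ : V) (η : V)) :
    ∀ μ₁ μ₂ : ℂ, μ₁ ≠ μ₂ → ∀ ξ η : ↥(Lperp P0 Pinf),
      (Submodule.Quotient.mk ξ : Qspace P0 Pinf) ∈ Module.End.eigenspace R μ₁ →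
      (Submodule.Quotient.mk η : Qspace P0 Pinf) ∈ Module.End.eigenspace R μ₂ →
      ∀ l : ℂ, pencil P0 Pinf (some l) (ξ : V) (η : V) = 0 := by
  intro μ₁ μ₂ hne ξ η hξ hη l
  have skew0 : ∀ u v : V, P0 u v = - P0 v u := by
    intro u v
    have h := h0 (u + v)
    simp only [map_add, LinearMap.add_apply, h0] at h
    linear_combination h
  have hRξ : R (Submodule.Quotient.mk ξ) = Submodule.Quotient.mk (μ₁ • ξ) := by
    rw [Module.End.mem_eigenspace_iff] at hξ
    rw [hξ, Submodule.Quotient.mk_smul]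
  have hRη : R (Submodule.Quotient.mk η) = Submodule.Quotient.mk (μ₂ • η) := by
    rw [Module.End.mem_eigenspace_iff] at hη
    rw [hη, Submodule.Quotient.mk_smul]
  have h1 := hR ξ (μ₁ • ξ) hRξ η
  have h2 := hR η (μ₂ • η) hRη ξ
  simp only [pencil, Submodule.coe_smul, map_smul, LinearMap.smul_apply,
    LinearMap.sub_apply, zero_smul, sub_zero, smul_eq_mul] at h1 h2 ⊢
  have hs : P0 (ξ : V) (η : V) = - P0 (η : V) (ξ : V) := skew0 _ _
  have hsinf : Pinf (ξ : V) (η : V) = - Pinf (η : V) (ξ : V) := by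
    have h := hinf ((ξ : V) + η)
    simp only [map_add, LinearMap.add_apply, hinf] at h
    linear_combination h
  have hPinf : Pinf (ξ : V) (η : V) = 0 := by
    have hd : (μ₁ - μ₂) * Pinf (ξ : V) (η : V) = 0 := by
      linear_combination h1 + h2 + hs - μ₂ * hsinf
    rcases mul_eq_zero.mp hd with h | h
    · exact absurd (sub_eq_zero.mp h) hne
    · exact h
  have hP0 : P0 (ξ : V) (η : V) = 0 := by linear_combination -h1 + μ₁ * hPinf
  rw [hP0, hPinf, mul_zero, sub_zero]
end
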